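/- arXiv:1211.6868 — 8 statements merged into one kernel-verified Lean document; each statement's English description precedes it below -/
import Mathlib

section
/- Let σ_a², σ_b² > 0 with σ_a² + σ_b² = 1, θ > 0, p_c > 0, k ≥ 1 an integer, and h̄_1, …, h̄_k > 0. Suppose β ∈ (0,1) and the powers P̄_n = θ·(β·σ_a² + σ_b²)/(β·h̄_n) for 1 ≤ n ≤ k satisfy ∑_{n=1}^k P̄_n·h̄_n = p_c/(1−β). Then β satisfies β² − c(k)·β − d = 0, where c(k) = 1 − σ_b²/σ_a² − p_c/(k·θ·σ_a²) and d = σ_b²/σ_a². -/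
/-! Each stream meets the threshold with equality, so its term `P̄_n h̄_n = θ(βσa² + σb²)/β`
no longer depends on the channel gain. The harvesting constraint therefore reads
`kθ(βσa² + σb²)(1 − β) = p_c β`, and dividing by `kθσa²` gives the quadratic. -/

open Finset

theorem sum_div_mul_mul_cancel {ι K : Type*} [Field K] (s : Finset ι) (c b : K) (h : ι → K)
    (hh : ∀ n ∈ s, h n ≠ 0) :
    ∑ n ∈ s, c / (b * h n) * h n = #s * (c / b) := by
  rw [← nsmul_eq_mul, ← sum_const]
  refine sum_congr rfl fun n hn => ?_
  field_simp [hh n hn]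

theorem sq_sub_mul_sub_eq_zero_of_mul_one_sub_eq {K : Type*} [Field K] {k θ a b p β : K}
    (hk : k ≠ 0) (hθ : θ ≠ 0) (ha : a ≠ 0)
    (h : k * (θ * (β * a + b)) * (1 - β) = p * β) :
    β ^ 2 - (1 - b / a - p / (k * θ * a)) * β - b / a = 0 := by
  field_simp
  linear_combination (-1) * h

theorem stmt_4_general (σa2 σb2 θ pc β : ℝ) (k : ℕ) (hbar : Fin k → ℝ)
    (ha : 0 < σa2)
    (hθ : 0 < θ) (hk : 1 ≤ k)
    (hpos : ∀ n, 0 < hbar n)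
    (hβ0 : 0 < β) (hβ1 : β < 1)
    (heq : (∑ n, (θ * (β * σa2 + σb2) / (β * hbar n)) * hbar n) = pc / (1 - β)) :
    β ^ 2 - (1 - σb2 / σa2 - pc / (k * θ * σa2)) * β - σb2 / σa2 = 0 := by
  rw [sum_div_mul_mul_cancel _ _ _ _ fun n _ => (hpos n).ne', card_univ, Fintype.card_fin,
    mul_div_assoc', div_eq_div_iff hβ0.ne' (sub_pos.2 hβ1).ne'] at heq
  exact sq_sub_mul_sub_eq_zero_of_mul_one_sub_eq (Nat.cast_ne_zero.2 (by omega)) hθ.ne' ha.ne' heq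

/-- If each of `k` streams exactly meets the SNR threshold, i.e.
`P̄_n = θ(βσa² + σb²)/(βh̄_n)`, and the harvested power exactly meets the circuit
power, i.e. `∑ P̄_n h̄_n = p_c/(1−β)`, then the splitting ratio `β ∈ (0,1)`
satisfies `β² − c(k)β − d = 0` with `c(k) = 1 − σb²/σa² − p_c/(kθσa²)` and
`d = σb²/σa²`. -/
theorem stmt_4 (σa2 σb2 θ pc β : ℝ) (k : ℕ) (hbar : Fin k → ℝ)
    (ha : 0 < σa2) (hb : 0 < σb2) (hsum : σa2 + σb2 = 1)
    (hθ : 0 < θ) (hpc : 0 < pc) (hk : 1 ≤ k)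
    (hpos : ∀ n, 0 < hbar n)
    (hβ0 : 0 < β) (hβ1 : β < 1)
    (heq : (∑ n, (θ * (β * σa2 + σb2) / (β * hbar n)) * hbar n) = pc / (1 - β)) :
    β ^ 2 - (1 - σb2 / σa2 - pc / (k * θ * σa2)) * β - σb2 / σa2 = 0 :=
  stmt_4_general σa2 σb2 θ pc β k hbar ha hθ hk hpos hβ0 hβ1 heq
end

section
/- Let K ≥ 1, let g : Fin K → ℝ be strictly positive channel gains, and let B ≥ 0. Suppose η > 0 and the set A = {n : η ≥ 1/g_n} is nonempty with ∑_{n∈A} (η − 1/g_n) = B. Then the allocation Q*_n = max(η − 1/g_n, 0) maximizes ∑_{n=1}^K log(1 + Q_n·g_n) over all Q : Fin K → ℝ with Q_n ≥ 0 for all n and ∑_{n=1}^K Q_n ≤ B. -/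
/-!
The objective is a sum of concave functions, so the water-filling allocation `Q*` is optimal as
soon as it satisfies the KKT conditions with multiplier `1 / η`: the tangent-line bound
`log y ≤ log c + (y - c) / c` at `c = 1 + Q*_n g_n` gives
`log (1 + Q_n g_n) ≤ log (1 + Q*_n g_n) + (Q_n - Q*_n) / η` for every `Q_n ≥ 0`, since the slope
`g_n / (1 + Q*_n g_n)` equals `1 / η` where `Q*_n > 0` and is below it where `Q*_n = 0`. Summed over `n`, the correction terms
add up to `(∑ Q_n - ∑ Q*_n) / η ≤ 0`, because `∑ Q*_n = B`.
-/

open Finset Real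

theorem Real.log_le_log_add_sub_div {y c : ℝ} (hy : 0 < y) (hc : 0 < c) :
    log y ≤ log c + (y - c) / c := by
  have h := log_le_sub_one_of_pos (div_pos hy hc)
  rw [log_div hy.ne' hc.ne', div_sub_one hc.ne'] at h
  linarith

namespace WaterFilling

noncomputable def power (η g : ℝ) : ℝ := max (η - 1 / g) 0

variable {η g : ℝ}

theorem power_eq_ite (η g : ℝ) : power η g = if 1 / g ≤ η then η - 1 / g else 0 := by
  unfold power
  split_ifs with h
  · exact max_eq_left (sub_nonneg.mpr h)
  · exact max_eq_right (sub_nonpos.mpr (not_le.mp h).le)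

theorem one_add_power_mul (hg : 0 < g) : 1 + power η g * g = max (η * g) 1 := by
  have h : (η - 1 / g) * g = η * g - 1 := by field_simp
  rw [power, max_mul_of_nonneg _ _ hg.le, h, zero_mul, add_max]
  simp only [add_sub_cancel, add_zero]

theorem log_one_add_mul_le (hg : 0 < g) (hη : 0 < η) {x : ℝ} (hx : 0 ≤ x) :
    log (1 + x * g) ≤ log (1 + power η g * g) + (x - power η g) / η := by
  have hc : 0 < 1 + power η g * g := by rw [one_add_power_mul hg]; positivity
  have hy : 0 < 1 + x * g := by positivity
  refine (log_le_log_add_sub_div hy hc).trans (add_le_add_right ?_ _)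
  rcases le_total 1 (η * g) with hηg | hηg
  · have hq : power η g = η - 1 / g := by
      rw [power_eq_ite, if_pos ((div_le_iff₀ hg).mpr (by linarith))]
    rw [one_add_power_mul hg, max_eq_left hηg, hq]
    exact le_of_eq (by field_simp; ring)
  · have hq : power η g = 0 := by
      rw [power, max_eq_right (sub_nonpos.mpr ((le_div_iff₀ hg).mpr (by linarith)))]
    rw [one_add_power_mul hg, max_eq_right hηg, hq, sub_zero, add_sub_cancel_left, div_one,
      le_div_iff₀ hη, mul_assoc]
    exact mul_le_of_le_one_right hx (by linarith)

variable {ι : Type*} [Fintype ι] {g : ι → ℝ}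

theorem sum_power_eq_sum_filter (η : ℝ) (g : ι → ℝ) :
    ∑ n, power η (g n) = ∑ n ∈ univ.filter (fun n => 1 / g n ≤ η), (η - 1 / g n) := by
  simp only [sum_filter, power_eq_ite]

theorem sum_log_le (hg : ∀ n, 0 < g n) (hη : 0 < η) {Q : ι → ℝ} (hQ : ∀ n, 0 ≤ Q n)
    (hQB : ∑ n, Q n ≤ ∑ n, power η (g n)) :
    ∑ n, log (1 + Q n * g n) ≤ ∑ n, log (1 + power η (g n) * g n) := by
  have hslack : (∑ n, (Q n - power η (g n))) / η ≤ 0 :=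
    div_nonpos_of_nonpos_of_nonneg (by rw [sum_sub_distrib]; linarith) hη.le
  calc ∑ n, log (1 + Q n * g n)
      ≤ ∑ n, (log (1 + power η (g n) * g n) + (Q n - power η (g n)) / η) :=
        sum_le_sum fun n _ => log_one_add_mul_le (hg n) hη (hQ n)
    _ = ∑ n, log (1 + power η (g n) * g n) + (∑ n, (Q n - power η (g n))) / η := by
        rw [sum_add_distrib, sum_div]
    _ ≤ ∑ n, log (1 + power η (g n) * g n) := by linarith

end WaterFilling

open WaterFilling in
theorem stmt_7_general (K : ℕ) (g : Fin K → ℝ) (B η : ℝ)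
    (hg : ∀ n, 0 < g n) (hη : 0 < η)
    (hsum : (∑ n ∈ Finset.univ.filter (fun n : Fin K => 1 / g n ≤ η),
        (η - 1 / g n)) = B) :
    (∀ n, 0 ≤ max (η - 1 / g n) 0) ∧
    (∑ n, max (η - 1 / g n) 0) ≤ B ∧
    ∀ Q : Fin K → ℝ, (∀ n, 0 ≤ Q n) → (∑ n, Q n) ≤ B →
      (∑ n, Real.log (1 + Q n * g n)) ≤
        ∑ n, Real.log (1 + max (η - 1 / g n) 0 * g n) := by
  have hB : ∑ n, power η (g n) = B := (sum_power_eq_sum_filter η g).trans hsum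
  refine ⟨fun n => le_max_right _ _, hB.le, fun Q hQ hQB => ?_⟩
  exact sum_log_le hg hη hQ (hQB.trans hB.ge)

/-- Classic water-filling optimality: if `η > 0`, the set `A = {n : η ≥ 1/g_n}`
is nonempty and `∑_{n∈A} (η − 1/g_n) = B`, then `Q*_n = max(η − 1/g_n, 0)`
maximizes `∑ log(1 + Q_n g_n)` over all `Q ≥ 0` with `∑ Q_n ≤ B`. -/
theorem stmt_7 (K : ℕ) (hK : 1 ≤ K) (g : Fin K → ℝ) (B η : ℝ)
    (hg : ∀ n, 0 < g n) (hB : 0 ≤ B) (hη : 0 < η)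
    (hA : (Finset.univ.filter (fun n : Fin K => 1 / g n ≤ η)).Nonempty)
    (hsum : (∑ n ∈ Finset.univ.filter (fun n : Fin K => 1 / g n ≤ η),
        (η - 1 / g n)) = B) :
    (∀ n, 0 ≤ max (η - 1 / g n) 0) ∧
    (∑ n, max (η - 1 / g n) 0) ≤ B ∧
    ∀ Q : Fin K → ℝ, (∀ n, 0 ≤ Q n) → (∑ n, Q n) ≤ B →
      (∑ n, Real.log (1 + Q n * g n)) ≤
        ∑ n, Real.log (1 + max (η - 1 / g n) 0 * g n) :=
  stmt_7_general K g B η hg hη hsum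
end

section
/- Let K ≥ 1, let g' : Fin K → ℝ and g : Fin K → ℝ be strictly positive downlink and uplink channel gains, and let p_t > 0, p_c > 0 satisfy p_t·max_n g'_n ≥ p_c. Then the supremum, over all downlink allocations P with P_n ≥ 0 and ∑_{n=1}^K P_n ≤ p_t satisfying ∑_{n=1}^K P_n·g'_n ≥ p_c, and all uplink allocations Q with Q_n ≥ 0 and ∑_{n=1}^K Q_n ≤ ∑_{n=1}^K P_n·g'_n − p_c, of the uplink throughput ∑_{n=1}^K log(1 + Q_n·g_n), equals the supremum of ∑_{n=1}^K log(1 + Q_n·g_n) over Q ≥ 0 with ∑_{n=1}^K Q_n ≤ p_t·max_n g'_n − p_c; in particular an optimal downlink policy transfers the full power p_t over the single sub-channel with the maximum gain g'_n. -/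
/-!
Whatever the downlink allocation, the harvested power `∑ P_n g'_n` is at most `p_t · max_n g'_n`,
with equality when all of `p_t` goes to a strongest sub-channel. So every uplink budget reachable
through some downlink allocation is at most `p_t · max_n g'_n − p_c`, and this largest budget is
itself reachable: the two sets of achievable throughputs coincide.
-/

open Finset

theorem Finset.sum_mul_le_mul_of_sum_le {ι R : Type*} [CommSemiring R] [PartialOrder R]
    [IsOrderedRing R] (s : Finset ι) {P w : ι → R} {c M : R} (hP : ∀ i ∈ s, 0 ≤ P i)
    (hPc : ∑ i ∈ s, P i ≤ c) (hw : ∀ i ∈ s, w i ≤ M) (hM : 0 ≤ M) :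
    ∑ i ∈ s, P i * w i ≤ c * M :=
  calc ∑ i ∈ s, P i * w i ≤ ∑ i ∈ s, P i * M :=
        sum_le_sum fun i hi => mul_le_mul_of_nonneg_left (hw i hi) (hP i hi)
    _ = (∑ i ∈ s, P i) * M := (sum_mul s P M).symm
    _ ≤ c * M := mul_le_mul_of_nonneg_right hPc hM

theorem setOf_joint_allocation_eq {ι : Type*} [Fintype ι] (g' : ι → ℝ)
    (f : (ι → ℝ) → ℝ) (pt pc M : ℝ) (P₀ : ι → ℝ) (hP₀ : ∀ n, 0 ≤ P₀ n)
    (hP₀pt : ∑ n, P₀ n ≤ pt) (hP₀M : ∑ n, P₀ n * g' n = pt * M)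
    (hharvest : ∀ P : ι → ℝ, (∀ n, 0 ≤ P n) → ∑ n, P n ≤ pt → ∑ n, P n * g' n ≤ pt * M)
    (hfeas : pc ≤ pt * M) :
    {r : ℝ | ∃ (P Q : ι → ℝ),
        (∀ n, 0 ≤ P n) ∧ (∑ n, P n) ≤ pt ∧ pc ≤ (∑ n, P n * g' n) ∧
        (∀ n, 0 ≤ Q n) ∧ (∑ n, Q n) ≤ (∑ n, P n * g' n) - pc ∧ r = f Q} =
      {r : ℝ | ∃ Q : ι → ℝ, (∀ n, 0 ≤ Q n) ∧ (∑ n, Q n) ≤ pt * M - pc ∧ r = f Q} := by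
  ext r
  constructor
  · rintro ⟨P, Q, hP, hPpt, -, hQ, hQbudget, rfl⟩
    exact ⟨Q, hQ, hQbudget.trans (by linarith [hharvest P hP hPpt]), rfl⟩
  · rintro ⟨Q, hQ, hQbudget, rfl⟩
    exact ⟨P₀, Q, hP₀, hP₀pt, hP₀M ▸ hfeas, hQ, hP₀M ▸ hQbudget, rfl⟩

theorem stmt_8_general (K : ℕ) (hK : 1 ≤ K) (g' g : Fin K → ℝ) (pt pc : ℝ)
    (hg' : ∀ n, 0 < g' n) (hpt : 0 < pt)
    (hfeas : pc ≤ pt * Finset.univ.sup' ⟨⟨0, hK⟩, Finset.mem_univ _⟩ g') :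
    (sSup {r : ℝ | ∃ (P Q : Fin K → ℝ),
        (∀ n, 0 ≤ P n) ∧ (∑ n, P n) ≤ pt ∧ pc ≤ (∑ n, P n * g' n) ∧
        (∀ n, 0 ≤ Q n) ∧ (∑ n, Q n) ≤ (∑ n, P n * g' n) - pc ∧
        r = ∑ n, Real.log (1 + Q n * g n)} =
      sSup {r : ℝ | ∃ Q : Fin K → ℝ,
        (∀ n, 0 ≤ Q n) ∧
        (∑ n, Q n) ≤ pt * Finset.univ.sup' ⟨⟨0, hK⟩, Finset.mem_univ _⟩ g' - pc ∧
        r = ∑ n, Real.log (1 + Q n * g n)}) ∧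
    ∃ m : Fin K, g' m = Finset.univ.sup' ⟨⟨0, hK⟩, Finset.mem_univ _⟩ g' ∧
      (∀ n, 0 ≤ (if n = m then pt else 0 : ℝ)) ∧
      (∑ n, (if n = m then pt else 0 : ℝ)) ≤ pt ∧
      (∑ n, (if n = m then pt else 0 : ℝ) * g' n) =
        pt * Finset.univ.sup' ⟨⟨0, hK⟩, Finset.mem_univ _⟩ g' ∧
      pc ≤ ∑ n, (if n = m then pt else 0 : ℝ) * g' n := by
  obtain ⟨m, -, hm⟩ := exists_mem_eq_sup' ⟨⟨0, hK⟩, mem_univ _⟩ g'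
  set M := Finset.univ.sup' ⟨⟨0, hK⟩, Finset.mem_univ _⟩ g'
  have hharvest (P : Fin K → ℝ) (hP : ∀ n, 0 ≤ P n) (hPpt : ∑ n, P n ≤ pt) :
      ∑ n, P n * g' n ≤ pt * M :=
    sum_mul_le_mul_of_sum_le univ (fun n _ => hP n) hPpt (fun n _ => le_sup' g' (mem_univ n))
      (hm ▸ (hg' m).le)
  have hsingle_nonneg (n : Fin K) : 0 ≤ (if n = m then pt else 0 : ℝ) := by
    split_ifs <;> simp [hpt.le]
  have hsingle_sum : ∑ n, (if n = m then pt else 0 : ℝ) ≤ pt := by simp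
  have hsingle_harvest : ∑ n, (if n = m then pt else 0 : ℝ) * g' n = pt * M := by
    simp [ite_mul, hm]
  refine ⟨congrArg sSup (setOf_joint_allocation_eq g' _ pt pc M _ hsingle_nonneg hsingle_sum
      hsingle_harvest hharvest hfeas), m, hm.symm, hsingle_nonneg, hsingle_sum,
      hsingle_harvest, hsingle_harvest ▸ hfeas⟩

/-- Single-user uplink IT with variable coding rates (Proposition 2): the
supremum of the uplink throughput over joint downlink allocations
`P ≥ 0, ∑ P_n ≤ p_t, ∑ P_n g'_n ≥ p_c` and uplink allocations
`Q ≥ 0, ∑ Q_n ≤ ∑ P_n g'_n − p_c` equals the supremum of the uplink throughput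
over `Q ≥ 0` with budget `p_t · max_n g'_n − p_c`; an optimal downlink policy
transfers the full power `p_t` over a single sub-channel with maximum gain. -/
theorem stmt_8 (K : ℕ) (hK : 1 ≤ K) (g' g : Fin K → ℝ) (pt pc : ℝ)
    (hg' : ∀ n, 0 < g' n) (hg : ∀ n, 0 < g n) (hpt : 0 < pt) (hpc : 0 < pc)
    (hfeas : pc ≤ pt * Finset.univ.sup' ⟨⟨0, hK⟩, Finset.mem_univ _⟩ g') :
    (sSup {r : ℝ | ∃ (P Q : Fin K → ℝ),
        (∀ n, 0 ≤ P n) ∧ (∑ n, P n) ≤ pt ∧ pc ≤ (∑ n, P n * g' n) ∧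
        (∀ n, 0 ≤ Q n) ∧ (∑ n, Q n) ≤ (∑ n, P n * g' n) - pc ∧
        r = ∑ n, Real.log (1 + Q n * g n)} =
      sSup {r : ℝ | ∃ Q : Fin K → ℝ,
        (∀ n, 0 ≤ Q n) ∧
        (∑ n, Q n) ≤ pt * Finset.univ.sup' ⟨⟨0, hK⟩, Finset.mem_univ _⟩ g' - pc ∧
        r = ∑ n, Real.log (1 + Q n * g n)}) ∧
    ∃ m : Fin K, g' m = Finset.univ.sup' ⟨⟨0, hK⟩, Finset.mem_univ _⟩ g' ∧
      (∀ n, 0 ≤ (if n = m then pt else 0 : ℝ)) ∧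
      (∑ n, (if n = m then pt else 0 : ℝ)) ≤ pt ∧
      (∑ n, (if n = m then pt else 0 : ℝ) * g' n) =
        pt * Finset.univ.sup' ⟨⟨0, hK⟩, Finset.mem_univ _⟩ g' ∧
      pc ≤ ∑ n, (if n = m then pt else 0 : ℝ) * g' n :=
  stmt_8_general K hK g' g pt pc hg' hpt hfeas
end

section
/- Let K ≥ 1, let g : Fin K → ℝ be strictly positive channel gains with descending rearrangement ḡ_1 ≥ ḡ_2 ≥ … ≥ ḡ_K, let θ > 0 and B ≥ 0. Then the maximum of #{n : Q_n·g_n ≥ θ} over all Q : Fin K → ℝ with Q_n ≥ 0 for all n and ∑_{n=1}^K Q_n ≤ B equals the largest integer k ∈ {0,1,…,K} such that θ·∑_{n=1}^k 1/ḡ_n ≤ B. -/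
/-!
Serving stream `n` needs power `Q n ≥ θ / g n`, so serving a set `S` of streams costs at least
`θ ∑_{n ∈ S} 1 / g n`, and channel inversion on `S` attains this cost. Among all sets of `k`
streams the cost is smallest for the `k` strongest sub-channels, because the `k` smallest
terms of the increasing sequence `1 / ḡ` are its first `k` terms. Hence `k` streams can be
served within the budget iff `θ ∑_{n < k} 1 / ḡ n ≤ B`.
-/

open Finset

theorem Fin.val_le_of_strictMono {m n : ℕ} {φ : Fin m → Fin n} (hφ : StrictMono φ) (i : Fin m) :
    (i : ℕ) ≤ φ i := by
  simpa using card_le_card_of_injOn φ (s := Iio i) (t := Iio (φ i))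
    (fun j hj => by simpa using hφ (by simpa using hj)) hφ.injective.injOn

theorem Fin.sum_filter_val_lt_card_le {M : Type*} [AddCommMonoid M] [PartialOrder M]
    [IsOrderedAddMonoid M] {n : ℕ} {f : Fin n → M} (hf : Monotone f) (s : Finset (Fin n)) :
    ∑ i : Fin n with i.val < #s, f i ≤ ∑ i ∈ s, f i := by
  have hs : #s ≤ n := by simpa using card_le_univ s
  have hinit : ({i | i.val < #s} : Finset (Fin n)) = univ.map (Fin.castLEEmb hs) := by
    ext i
    simp only [mem_filter, mem_univ, true_and, mem_map, Fin.castLEEmb_apply]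
    exact ⟨fun h => ⟨⟨i, h⟩, rfl⟩, by rintro ⟨j, rfl⟩; exact j.isLt⟩
  calc ∑ i : Fin n with i.val < #s, f i = ∑ i : Fin #s, f (Fin.castLE hs i) := by
        rw [hinit, sum_map]; rfl
    _ ≤ ∑ i : Fin #s, f (s.orderEmbOfFin rfl i) :=
        sum_le_sum fun i _ => hf (Fin.val_le_of_strictMono (s.orderEmbOfFin rfl).strictMono i)
    _ = ∑ i ∈ s, f i := by simpa using (sum_map univ (s.orderEmbOfFin rfl).toEmbedding f).symm

variable {ι : Type*} {θ : ℝ} {g : ι → ℝ}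

theorem mul_sum_one_div_le_sum [Fintype ι] {Q : ι → ℝ} (hg : ∀ n, 0 < g n) (hQ : ∀ n, 0 ≤ Q n) :
    θ * ∑ n with θ ≤ Q n * g n, 1 / g n ≤ ∑ n, Q n := by
  rw [mul_sum]
  calc ∑ n with θ ≤ Q n * g n, θ * (1 / g n) ≤ ∑ n with θ ≤ Q n * g n, Q n := by
        refine sum_le_sum fun n hn => ?_
        rw [mul_one_div, div_le_iff₀ (hg n)]
        exact (mem_filter.1 hn).2
    _ ≤ ∑ n, Q n := sum_le_sum_of_subset_of_nonneg (subset_univ _) fun n _ _ => hQ n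

section ChannelInversion

variable [DecidableEq ι]

noncomputable def channelInversion (θ : ℝ) (g : ι → ℝ) (s : Finset ι) (n : ι) : ℝ :=
  if n ∈ s then θ / g n else 0

theorem channelInversion_nonneg (hθ : 0 ≤ θ) (hg : ∀ n, 0 < g n) (s : Finset ι) (n : ι) :
    0 ≤ channelInversion θ g s n := by
  unfold channelInversion; split_ifs
  · exact div_nonneg hθ (hg n).le
  · exact le_rfl

variable [Fintype ι]

theorem sum_channelInversion (θ : ℝ) (g : ι → ℝ) (s : Finset ι) :
    ∑ n, channelInversion θ g s n = θ * ∑ n ∈ s, 1 / g n := by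
  simp only [channelInversion, ← sum_filter, filter_mem_eq_inter, univ_inter, mul_sum, mul_one_div]

theorem filter_le_channelInversion_mul (hθ : 0 < θ) (hg : ∀ n, 0 < g n) (s : Finset ι) :
    ({n | θ ≤ channelInversion θ g s n * g n} : Finset ι) = s := by
  ext n
  by_cases hn : n ∈ s <;> simp [channelInversion, hn, div_mul_cancel₀ θ (hg n).ne', hθ]

end ChannelInversion

theorem stmt_9_general (K : ℕ) (g gbar : Fin K → ℝ) (σ : Equiv.Perm (Fin K))
    (θ B : ℝ) (kstar : ℕ)
    (hg : ∀ n, 0 < g n)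
    (hperm : ∀ n, gbar n = g (σ n)) (hdesc : Antitone gbar)
    (hθ : 0 < θ)
    (hkK : kstar ≤ K)
    (hkfeas : θ * (∑ n ∈ Finset.univ.filter (fun n : Fin K => (n : ℕ) < kstar),
        1 / gbar n) ≤ B)
    (hkmax : ∀ k ≤ K,
      θ * (∑ n ∈ Finset.univ.filter (fun n : Fin K => (n : ℕ) < k), 1 / gbar n) ≤ B →
      k ≤ kstar) :
    IsGreatest
      {m : ℕ | ∃ Q : Fin K → ℝ, (∀ n, 0 ≤ Q n) ∧ (∑ n, Q n) ≤ B ∧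
        m = (Finset.univ.filter (fun n : Fin K => θ ≤ Q n * g n)).card}
      kstar := by
  obtain rfl : gbar = g ∘ σ := funext hperm
  constructor
  · set best : Finset (Fin K) := {n | (n : ℕ) < kstar}
    refine ⟨channelInversion θ g (best.map σ.toEmbedding), channelInversion_nonneg hθ.le hg _,
      ?_, ?_⟩
    · simpa [sum_channelInversion, sum_map] using hkfeas
    · rw [filter_le_channelInversion_mul hθ hg, card_map, Fin.card_filter_val_lt, min_eq_right hkK]
  · rintro _ ⟨Q, hQ, hQB, rfl⟩
    set served : Finset (Fin K) := {n | θ ≤ Q n * g n}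
    have hmono : Monotone fun n => 1 / (g ∘ σ) n := fun i j hij =>
      one_div_le_one_div_of_le (hg _) (hdesc hij)
    have hsorted := Fin.sum_filter_val_lt_card_le hmono (served.map σ.symm.toEmbedding)
    rw [card_map] at hsorted
    refine hkmax _ (by simpa using card_le_univ served) ?_
    calc θ * ∑ n : Fin K with n.val < #served, 1 / (g ∘ σ) n
        ≤ θ * ∑ n ∈ served, 1 / g n := by
          gcongr
          simpa [sum_map] using hsorted
      _ ≤ ∑ n, Q n := mul_sum_one_div_le_sum hg hQ
      _ ≤ B := hQB

/-- Greedy channel inversion (Proposition 3): with gains `g_n > 0`, descending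
rearrangement `ḡ`, threshold `θ > 0` and budget `B ≥ 0`, the maximum number of
streams with `Q_n g_n ≥ θ` over `Q ≥ 0, ∑ Q_n ≤ B` equals the largest
`k ∈ {0,…,K}` with `θ ∑_{n=1}^k 1/ḡ_n ≤ B`. -/
theorem stmt_9 (K : ℕ) (hK : 1 ≤ K) (g gbar : Fin K → ℝ) (σ : Equiv.Perm (Fin K))
    (θ B : ℝ) (kstar : ℕ)
    (hg : ∀ n, 0 < g n)
    (hperm : ∀ n, gbar n = g (σ n)) (hdesc : Antitone gbar)
    (hθ : 0 < θ) (hB : 0 ≤ B)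
    (hkK : kstar ≤ K)
    (hkfeas : θ * (∑ n ∈ Finset.univ.filter (fun n : Fin K => (n : ℕ) < kstar),
        1 / gbar n) ≤ B)
    (hkmax : ∀ k ≤ K,
      θ * (∑ n ∈ Finset.univ.filter (fun n : Fin K => (n : ℕ) < k), 1 / gbar n) ≤ B →
      k ≤ kstar) :
    IsGreatest
      {m : ℕ | ∃ Q : Fin K → ℝ, (∀ n, 0 ≤ Q n) ∧ (∑ n, Q n) ≤ B ∧
        m = (Finset.univ.filter (fun n : Fin K => θ ≤ Q n * g n)).card}
      kstar :=
  stmt_9_general K g gbar σ θ B kstar hg hperm hdesc hθ hkK hkfeas hkmax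
end

section
/- Let L ≥ 1, let h̄_1 ≥ h̄_2 ≥ … ≥ h̄_L > 0, let p_t > 0 and p_c > 0 with B := p_t − p_c·∑_{n=1}^L 1/h̄_n ≥ 0, and set η = (p_t + (1 − p_c)·∑_{n=1}^L 1/h̄_n)/L. If η ≥ 1/h̄_n for all 1 ≤ n ≤ L, then the allocation T*_n = η − 1/h̄_n maximizes ∑_{n=1}^L log(1 + T_n·h̄_n) over all T with T_n ≥ 0 and ∑_{n=1}^L T_n ≤ B, and the maximum value equals ∑_{n=1}^L log(h̄_n) + L·log(η). -/
/-!
Writing `1 + T_n h̄_n = h̄_n (1/h̄_n + T_n)` splits the throughput into `∑ log h̄_n`, which does not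
depend on `T`, plus `∑ log (1/h̄_n + T_n)`. By concavity of `log` (AM–GM) the latter is at most
`L log` of the mean of the `1/h̄_n + T_n`, and the budget bounds that mean by `η`. The allocation
`T*_n = η − 1/h̄_n` makes every `1/h̄_n + T*_n` equal to `η`, so it attains the bound and spends
exactly the budget.
-/

open Finset Real

section WaterFilling

variable {ι : Type*} [Fintype ι]

theorem sum_log_le_card_mul_log_of_sum_le {x : ι → ℝ} {η : ℝ} (hx : ∀ i, 0 < x i)
    (hsum : ∑ i, x i ≤ Fintype.card ι * η) :
    ∑ i, log (x i) ≤ Fintype.card ι * log η := by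
  cases isEmpty_or_nonempty ι
  · simp
  have hcard : (0 : ℝ) < Fintype.card ι := by exact_mod_cast Fintype.card_pos
  have hjensen := strictConcaveOn_log_Ioi.concaveOn.le_map_sum (t := univ)
    (w := fun _ => (Fintype.card ι : ℝ)⁻¹) (p := x) (fun _ _ => by positivity)
    (by simp [card_univ, hcard.ne']) (fun i _ => hx i)
  simp only [smul_eq_mul, ← mul_sum] at hjensen
  have hmean : (Fintype.card ι : ℝ)⁻¹ * ∑ i, x i ≤ η := by
    rwa [inv_mul_le_iff₀ hcard]
  have hmean_pos : 0 < (Fintype.card ι : ℝ)⁻¹ * ∑ i, x i :=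
    mul_pos (inv_pos.2 hcard) (sum_pos (fun i _ => hx i) univ_nonempty)
  rw [← inv_mul_le_iff₀ hcard]
  exact hjensen.trans (log_le_log hmean_pos hmean)

theorem log_one_add_mul_eq_log_add_log_inv_add {h t : ℝ} (hh : 0 < h) (ht : 0 < 1 / h + t) :
    log (1 + t * h) = log h + log (1 / h + t) := by
  rw [← log_mul hh.ne' ht.ne']
  congr 1
  field_simp

theorem sum_log_one_add_mul_le {h T : ι → ℝ} {η : ℝ} (hh : ∀ i, 0 < h i) (hT : ∀ i, 0 ≤ T i)
    (hsum : ∑ i, (1 / h i + T i) ≤ Fintype.card ι * η) :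
    ∑ i, log (1 + T i * h i) ≤ ∑ i, log (h i) + Fintype.card ι * log η := by
  have hpos : ∀ i, 0 < 1 / h i + T i := fun i =>
    add_pos_of_pos_of_nonneg (one_div_pos.2 (hh i)) (hT i)
  rw [sum_congr rfl fun i _ => log_one_add_mul_eq_log_add_log_inv_add (hh i) (hpos i),
    sum_add_distrib]
  exact add_le_add_right (sum_log_le_card_mul_log_of_sum_le hpos hsum) _

theorem log_one_add_sub_inv_mul {h η : ℝ} (hh : 0 < h) (hη : 1 / h ≤ η) :
    log (1 + (η - 1 / h) * h) = log h + log η := by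
  rw [log_one_add_mul_eq_log_add_log_inv_add hh (by linarith [one_div_pos.2 hh]),
    add_sub_cancel]

end WaterFilling

theorem stmt_12_general (L : ℕ) (hL : 1 ≤ L) (hbar : Fin L → ℝ) (pt pc : ℝ)
    (hpos : ∀ n, 0 < hbar n)
    (hη : ∀ n, 1 / hbar n ≤ (pt + (1 - pc) * ∑ m, 1 / hbar m) / L) :
    (∀ n, 0 ≤ (pt + (1 - pc) * ∑ m, 1 / hbar m) / L - 1 / hbar n) ∧
    (∑ n, ((pt + (1 - pc) * ∑ m, 1 / hbar m) / L - 1 / hbar n)) ≤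
      pt - pc * ∑ n, 1 / hbar n ∧
    (∀ T : Fin L → ℝ, (∀ n, 0 ≤ T n) →
      (∑ n, T n) ≤ pt - pc * ∑ n, 1 / hbar n →
      (∑ n, Real.log (1 + T n * hbar n)) ≤
        ∑ n, Real.log (1 + ((pt + (1 - pc) * ∑ m, 1 / hbar m) / L - 1 / hbar n)
          * hbar n)) ∧
    (∑ n, Real.log (1 + ((pt + (1 - pc) * ∑ m, 1 / hbar m) / L - 1 / hbar n)
        * hbar n)) =
      (∑ n, Real.log (hbar n)) +
        L * Real.log ((pt + (1 - pc) * ∑ m, 1 / hbar m) / L) := by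
  set S := ∑ m, 1 / hbar m
  set η := (pt + (1 - pc) * S) / L
  have hLη : (L : ℝ) * η = pt + (1 - pc) * S :=
    mul_div_cancel₀ _ (Nat.cast_ne_zero.2 (by omega))
  have hvalue : ∑ n, log (1 + (η - 1 / hbar n) * hbar n) = ∑ n, log (hbar n) + L * log η := by
    simp only [log_one_add_sub_inv_mul (hpos _) (hη _), sum_add_distrib, sum_const, card_univ,
      Fintype.card_fin, nsmul_eq_mul]
  refine ⟨fun n => sub_nonneg.2 (hη n), ?_, fun T hT hTsum => ?_, hvalue⟩
  · rw [sum_sub_distrib, sum_const, card_univ, Fintype.card_fin, nsmul_eq_mul, hLη]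
    linarith
  · rw [hvalue]
    simpa only [Fintype.card_fin] using sum_log_one_add_mul_le (η := η) hpos hT
      (by rw [sum_add_distrib, Fintype.card_fin, hLη]; linarith)

/-- Water-filling over the `L` active sub-channels in the multi-user downlink
variable-rate system: with descending gains `h̄_n > 0`, residual budget
`B = p_t − p_c ∑ 1/h̄_n ≥ 0` and water level `η = (p_t + (1−p_c)∑ 1/h̄_n)/L`
satisfying `η ≥ 1/h̄_n` for all `n`, the allocation `T*_n = η − 1/h̄_n`
maximizes `∑ log(1 + T_n h̄_n)` over `T ≥ 0` with `∑ T_n ≤ B`, and the maximum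
value equals `∑ log h̄_n + L log η`. -/
theorem stmt_12 (L : ℕ) (hL : 1 ≤ L) (hbar : Fin L → ℝ) (pt pc : ℝ)
    (hpos : ∀ n, 0 < hbar n) (hdesc : Antitone hbar)
    (hpt : 0 < pt) (hpc : 0 < pc)
    (hB : 0 ≤ pt - pc * ∑ n, 1 / hbar n)
    (hη : ∀ n, 1 / hbar n ≤ (pt + (1 - pc) * ∑ m, 1 / hbar m) / L) :
    (∀ n, 0 ≤ (pt + (1 - pc) * ∑ m, 1 / hbar m) / L - 1 / hbar n) ∧
    (∑ n, ((pt + (1 - pc) * ∑ m, 1 / hbar m) / L - 1 / hbar n)) ≤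
      pt - pc * ∑ n, 1 / hbar n ∧
    (∀ T : Fin L → ℝ, (∀ n, 0 ≤ T n) →
      (∑ n, T n) ≤ pt - pc * ∑ n, 1 / hbar n →
      (∑ n, Real.log (1 + T n * hbar n)) ≤
        ∑ n, Real.log (1 + ((pt + (1 - pc) * ∑ m, 1 / hbar m) / L - 1 / hbar n)
          * hbar n)) ∧
    (∑ n, Real.log (1 + ((pt + (1 - pc) * ∑ m, 1 / hbar m) / L - 1 / hbar n)
        * hbar n)) =
      (∑ n, Real.log (hbar n)) +
        L * Real.log ((pt + (1 - pc) * ∑ m, 1 / hbar m) / L) :=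
  stmt_12_general L hL hbar pt pc hpos hη
end

section
/- Let K ≥ 1, let h : Fin K → ℝ be strictly positive channel gains with descending rearrangement h̄_1 ≥ … ≥ h̄_K, let p_t > 0 and p_c > 0. For 1 ≤ ℓ ≤ K define η(ℓ) = (p_t + (1 − p_c)·∑_{n=1}^ℓ 1/h̄_n)/ℓ, let ℓ_max be the largest ℓ such that p_c·∑_{n=1}^ℓ 1/h̄_n ≤ p_t and η(ℓ) ≥ 1/h̄_n for all n ≤ ℓ, and let L* = argmax_{1≤ℓ≤ℓ_max} [∑_{n=1}^ℓ log(h̄_n) + ℓ·log(η(ℓ))]. Then the allocation that assigns P*_n = p_c/h̄_n + η(L*) − 1/h̄_n to the L* sub-channels with the largest gains and zero to the rest maximizes ∑_{n=1}^K 𝟙[P_n·h_n ≥ p_c]·log(1 + P_n·h_n − p_c) over all P with P_n ≥ 0 and ∑_{n=1}^K P_n ≤ p_t, and the maximum value is ∑_{n=1}^{L*} log(h̄_n) + L*·log(η(L*)). -/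
/-!
Work in sorted coordinates, where channel `n` has gain `h̄ n`. Moving the rates of the active
mobiles, in order, onto the strongest channels keeps every rate and does not increase the power,
so it suffices to bound `∑_{i<ℓ} log x_i` for rates `x_i = 1 + P_i h̄_i - p_c ≥ 1` on the `ℓ`
strongest channels. If `ℓ` is feasible, AM-GM applied to the `x_i / h̄_i`, whose sum is at most
`ℓ η(ℓ)`, bounds it by `V(ℓ) ≤ V(L*)`. Otherwise the water level `η(ℓ)` lies below the floor
`1 / h̄_ℓ` of the weakest channel; dropping that channel (of rate `w`) and spending its power on
scaling the other `m = ℓ - 1` rates by `m / (m + 1 - w)` does not decrease the sum of logarithms,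
and induction on `ℓ` concludes. Finally `η` is non-increasing up to `ℓ_max`, so `L*` is feasible
and the water-filling allocation attains `V(L*)`.
-/

open Finset Real

theorem Fin.val_le_val_of_strictMono {n m : ℕ} {f : Fin n → Fin m} (hf : StrictMono f)
    (i : Fin n) : (i : ℕ) ≤ f i := by
  obtain ⟨k, hk⟩ := i
  induction k with
  | zero => exact Nat.zero_le _
  | succ k ih =>
    have hlt : f ⟨k, by omega⟩ < f ⟨k + 1, hk⟩ := hf (Fin.mk_lt_mk.mpr k.lt_succ_self)
    have ih' : k ≤ (f ⟨k, _⟩ : ℕ) := ih (by omega)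
    rw [Fin.lt_def] at hlt
    show k + 1 ≤ (f ⟨k + 1, hk⟩ : ℕ)
    omega

theorem Fin.sum_filter_val_lt {M : Type*} [AddCommMonoid M] {K ℓ : ℕ} (hℓ : ℓ ≤ K)
    (f : Fin K → M) :
    ∑ n ∈ univ.filter (fun n : Fin K => (n : ℕ) < ℓ), f n = ∑ i : Fin ℓ, f (Fin.castLE hℓ i) := by
  rw [show ∑ i : Fin ℓ, f (Fin.castLE hℓ i) = ∑ n ∈ univ.map (Fin.castLEEmb hℓ), f n by
    rw [sum_map]; rfl]
  congr 1
  ext n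
  simp only [mem_filter, mem_univ, true_and, mem_map, Fin.coe_castLEEmb]
  exact ⟨fun hn => ⟨⟨n, hn⟩, rfl⟩, by rintro ⟨i, rfl⟩; exact i.isLt⟩

theorem Real.sum_log_le_card_mul_log {ι : Type*} {s : Finset ι} {y : ι → ℝ} {μ : ℝ}
    (hs : s.Nonempty) (hy : ∀ i ∈ s, 0 < y i) (hsum : ∑ i ∈ s, y i ≤ #s * μ) :
    ∑ i ∈ s, log (y i) ≤ #s * log μ := by
  have hcard : (0 : ℝ) < #s := by exact_mod_cast hs.card_pos
  have hμ : 0 < μ := pos_of_mul_pos_right ((sum_pos hy hs).trans_le hsum) hcard.le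
  have tangent : ∀ i ∈ s, log (y i) ≤ log μ + (y i / μ - 1) := fun i hi => by
    have := log_le_sub_one_of_pos (div_pos (hy i hi) hμ)
    rw [log_div (hy i hi).ne' hμ.ne'] at this
    linarith
  calc ∑ i ∈ s, log (y i) ≤ ∑ i ∈ s, (log μ + (y i / μ - 1)) := sum_le_sum tangent
    _ = #s * log μ + ((∑ i ∈ s, y i) / μ - #s) := by
      rw [sum_add_distrib, sum_sub_distrib, ← sum_div]; simp
    _ ≤ #s * log μ := by
      have : (∑ i ∈ s, y i) / μ ≤ #s := (div_le_iff₀ hμ).mpr hsum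
      linarith

theorem Real.log_le_mul_log_div {m w : ℝ} (hm : 0 < m) (hw : 0 < w) (hwm : w < m + 1) :
    log w ≤ m * log (m / (m + 1 - w)) := by
  have h1 := log_le_sub_one_of_pos (div_pos (by linarith : 0 < m + 1 - w) hm)
  have h2 := log_le_sub_one_of_pos hw
  rw [← inv_div, log_inv]
  have h3 : m * ((m + 1 - w) / m - 1) = 1 - w := by field_simp; ring
  nlinarith [mul_le_mul_of_nonneg_left h1 hm.le]

theorem exists_sum_log_le_of_drop_last {m : ℕ} {g : Fin (m + 1) → ℝ} {c B : ℝ}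
    (hg : ∀ i, 0 < g i) (hc : 0 ≤ c) {x : Fin (m + 1) → ℝ} (hx : ∀ i, 1 ≤ x i)
    (hbudget : ∑ i, (x i - 1 + c) / g i ≤ B)
    (hweak : ∑ i, x i / g i < (m + 1) / g (Fin.last m)) :
    ∃ x' : Fin m → ℝ, (∀ i, 1 ≤ x' i) ∧ ∑ i, (x' i - 1 + c) / g (Fin.castSucc i) ≤ B ∧
      ∑ i, log (x i) ≤ ∑ i, log (x' i) := by
  rw [Fin.sum_univ_castSucc] at hbudget hweak
  set w := x (Fin.last m)
  set G := g (Fin.last m)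
  set Y := ∑ i : Fin m, x (Fin.castSucc i) / g (Fin.castSucc i)
  have hG : 0 < G := hg _
  have hw : 1 ≤ w := hx _
  have hY : 0 ≤ Y := sum_nonneg fun i _ => div_nonneg (by linarith [hx i.castSucc]) (hg _).le
  have hYG : Y < (m + 1 - w) / G := by
    rw [sub_div]
    linarith
  have hd : 0 < (m : ℝ) + 1 - w := (div_pos_iff_of_pos_right hG).mp (hY.trans_lt hYG)
  have hm : (0 : ℝ) < m := by linarith
  set t := (m : ℝ) / (m + 1 - w) with ht_def
  have ht : 1 ≤ t := (one_le_div hd).mpr (by linarith)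
  refine ⟨fun i => t * x (Fin.castSucc i), fun i => one_le_mul_of_one_le_of_one_le ht (hx _),
    ?_, ?_⟩
  · have hsplit : ∑ i : Fin m, (t * x i.castSucc - 1 + c) / g i.castSucc
        = ∑ i : Fin m, (x i.castSucc - 1 + c) / g i.castSucc + (t - 1) * Y := by
      rw [mul_sum, ← sum_add_distrib]
      refine sum_congr rfl fun i _ => ?_
      field_simp
      ring
    have hgain : (t - 1) * Y ≤ (w - 1 + c) / G :=
      calc (t - 1) * Y ≤ (t - 1) * ((m + 1 - w) / G) :=
            mul_le_mul_of_nonneg_left hYG.le (by linarith)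
        _ = (w - 1) / G := by rw [ht_def]; field_simp; ring
        _ ≤ (w - 1 + c) / G := by gcongr; linarith
    beta_reduce
    linarith
  · have hlog : ∑ i : Fin m, log (t * x i.castSucc)
        = m * log t + ∑ i : Fin m, log (x i.castSucc) := by
      have hterm : ∀ i : Fin m, log (t * x i.castSucc) = log t + log (x i.castSucc) :=
        fun i => log_mul (by linarith) (by linarith [hx i.castSucc])
      simp only [hterm, sum_add_distrib, sum_const, card_univ, Fintype.card_fin, nsmul_eq_mul]
    have := log_le_mul_log_div hm (by linarith) (by linarith : w < m + 1)
    rw [Fin.sum_univ_castSucc]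
    beta_reduce
    linarith

namespace Swipt

noncomputable section

variable {K : ℕ} (hbar : Fin K → ℝ) (pt pc : ℝ)

def invGainSum (ℓ : ℕ) : ℝ :=
  ∑ n ∈ univ.filter (fun n : Fin K => (n : ℕ) < ℓ), 1 / hbar n

def waterLevel (ℓ : ℕ) : ℝ :=
  (pt + (1 - pc) * invGainSum hbar ℓ) / ℓ

def IsFeasible (ℓ : ℕ) : Prop :=
  pc * invGainSum hbar ℓ ≤ pt ∧ ∀ n : Fin K, (n : ℕ) < ℓ → 1 / hbar n ≤ waterLevel hbar pt pc ℓ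

def throughput (ℓ : ℕ) : ℝ :=
  (∑ n ∈ univ.filter (fun n : Fin K => (n : ℕ) < ℓ), log (hbar n)) +
    ℓ * log (waterLevel hbar pt pc ℓ)

def sumRate (P : Fin K → ℝ) : ℝ :=
  ∑ n, if pc ≤ P n * hbar n then log (1 + P n * hbar n - pc) else 0

-- The allocation `P*` in sorted coordinates: `p_c / h̄ + (η - 1 / h̄) = η - (1 - p_c) / h̄`.
def waterFill (L : ℕ) (n : Fin K) : ℝ :=
  if (n : ℕ) < L then waterLevel hbar pt pc L - (1 - pc) / hbar n else 0

variable {hbar pt pc}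

theorem invGainSum_eq {ℓ : ℕ} (hℓ : ℓ ≤ K) :
    invGainSum hbar ℓ = ∑ i : Fin ℓ, 1 / hbar (Fin.castLE hℓ i) :=
  Fin.sum_filter_val_lt hℓ _

theorem invGainSum_succ {ℓ : ℕ} (hℓ : ℓ < K) :
    invGainSum hbar (ℓ + 1) = invGainSum hbar ℓ + 1 / hbar ⟨ℓ, hℓ⟩ := by
  rw [invGainSum_eq hℓ, invGainSum_eq hℓ.le, Fin.sum_univ_castSucc]
  rfl

theorem mul_waterLevel {ℓ : ℕ} (hℓ : ℓ ≠ 0) :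
    ℓ * waterLevel hbar pt pc ℓ = pt + (1 - pc) * invGainSum hbar ℓ :=
  mul_div_cancel₀ _ (Nat.cast_ne_zero.mpr hℓ)

theorem waterLevel_succ_le {ℓ : ℕ} (hpc : 0 ≤ pc) (hℓ : 1 ≤ ℓ) (hℓK : ℓ < K)
    (hpos : 0 < hbar ⟨ℓ, hℓK⟩) (h : 1 / hbar ⟨ℓ, hℓK⟩ ≤ waterLevel hbar pt pc (ℓ + 1)) :
    waterLevel hbar pt pc (ℓ + 1) ≤ waterLevel hbar pt pc ℓ := by
  have e : (ℓ : ℝ) * waterLevel hbar pt pc ℓ = _ := mul_waterLevel (by omega)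
  have e' : ((ℓ + 1 : ℕ) : ℝ) * waterLevel hbar pt pc (ℓ + 1) = _ := mul_waterLevel (by omega)
  rw [invGainSum_succ hℓK] at e'
  push_cast at e'
  have hdiff : (ℓ : ℝ) * (waterLevel hbar pt pc ℓ - waterLevel hbar pt pc (ℓ + 1))
      = waterLevel hbar pt pc (ℓ + 1) - (1 - pc) * (1 / hbar ⟨ℓ, hℓK⟩) := by
    linear_combination e - e'
  have hrhs : 0 ≤ waterLevel hbar pt pc (ℓ + 1) - (1 - pc) * (1 / hbar ⟨ℓ, hℓK⟩) := by
    nlinarith [one_div_pos.mpr hpos]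
  have hl : (0 : ℝ) < ℓ := by exact_mod_cast hℓ
  nlinarith

theorem IsFeasible.of_succ (hpos : ∀ n, 0 < hbar n) (hanti : Antitone hbar) (hpc : 0 ≤ pc)
    {ℓ : ℕ} (hℓ : 1 ≤ ℓ) (hℓK : ℓ < K) (h : IsFeasible hbar pt pc (ℓ + 1)) :
    IsFeasible hbar pt pc ℓ := by
  have hlast : 1 / hbar ⟨ℓ, hℓK⟩ ≤ waterLevel hbar pt pc (ℓ + 1) := h.2 _ ℓ.lt_succ_self
  refine ⟨?_, fun n hn => ?_⟩
  · have := h.1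
    rw [invGainSum_succ hℓK] at this
    exact le_trans (mul_le_mul_of_nonneg_left
      (le_add_of_nonneg_right (one_div_pos.mpr (hpos _)).le) hpc) this
  · calc 1 / hbar n ≤ 1 / hbar ⟨ℓ, hℓK⟩ :=
          one_div_le_one_div_of_le (hpos _) (hanti (Fin.mk_le_mk.mpr hn.le))
      _ ≤ waterLevel hbar pt pc (ℓ + 1) := hlast
      _ ≤ waterLevel hbar pt pc ℓ := waterLevel_succ_le hpc hℓ hℓK (hpos _) hlast

theorem IsFeasible.of_le (hpos : ∀ n, 0 < hbar n) (hanti : Antitone hbar) (hpc : 0 ≤ pc)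
    {ℓ L : ℕ} (hL : IsFeasible hbar pt pc L) (hℓ : 1 ≤ ℓ) (hℓL : ℓ ≤ L) (hLK : L ≤ K) :
    IsFeasible hbar pt pc ℓ := by
  induction L, hℓL using Nat.le_induction with
  | base => exact hL
  | succ L hℓL ih => exact ih (hL.of_succ hpos hanti hpc (hℓ.trans hℓL) hLK) (by omega)

theorem IsFeasible.waterLevel_pos (hpos : ∀ n, 0 < hbar n) {ℓ : ℕ}
    (h : IsFeasible hbar pt pc ℓ) (hℓ : 1 ≤ ℓ) (hℓK : ℓ ≤ K) : 0 < waterLevel hbar pt pc ℓ :=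
  (one_div_pos.mpr (hpos ⟨0, by omega⟩)).trans_le (h.2 _ hℓ)

theorem throughput_eq_sum_log {ℓ : ℕ} (hpos : ∀ n, 0 < hbar n) (hℓK : ℓ ≤ K)
    (hη : 0 < waterLevel hbar pt pc ℓ) :
    throughput hbar pt pc ℓ =
      ∑ n ∈ univ.filter (fun n : Fin K => (n : ℕ) < ℓ), log (hbar n * waterLevel hbar pt pc ℓ) := by
  rw [throughput, sum_congr rfl fun n _ => log_mul (hpos n).ne' hη.ne', sum_add_distrib, sum_const,
    Fin.card_filter_val_lt, min_eq_right hℓK, nsmul_eq_mul]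

theorem IsFeasible.throughput_nonneg (hpos : ∀ n, 0 < hbar n) {ℓ : ℕ}
    (h : IsFeasible hbar pt pc ℓ) (hℓ : 1 ≤ ℓ) (hℓK : ℓ ≤ K) : 0 ≤ throughput hbar pt pc ℓ := by
  have hη := h.waterLevel_pos hpos hℓ hℓK
  rw [throughput_eq_sum_log hpos hℓK hη]
  refine sum_nonneg fun n hn => log_nonneg ?_
  have := h.2 n (mem_filter.mp hn).2
  rwa [div_le_iff₀ (hpos n), mul_comm] at this

theorem sum_div_le_mul_waterLevel {ℓ : ℕ} (hℓK : ℓ ≤ K) (hℓ : ℓ ≠ 0) {x : Fin ℓ → ℝ}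
    (hbudget : ∑ i, (x i - 1 + pc) / hbar (Fin.castLE hℓK i) ≤ pt) :
    ∑ i, x i / hbar (Fin.castLE hℓK i) ≤ ℓ * waterLevel hbar pt pc ℓ := by
  have hsplit : ∑ i, x i / hbar (Fin.castLE hℓK i)
      = ∑ i, (x i - 1 + pc) / hbar (Fin.castLE hℓK i) + (1 - pc) * invGainSum hbar ℓ := by
    rw [invGainSum_eq hℓK, mul_sum, ← sum_add_distrib]
    refine sum_congr rfl fun i _ => ?_
    ring
  rw [mul_waterLevel hℓ, hsplit]
  linarith

theorem sum_log_le_throughput (hpos : ∀ n, 0 < hbar n) {ℓ : ℕ} (hℓK : ℓ ≤ K) (hℓ : 1 ≤ ℓ)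
    {x : Fin ℓ → ℝ} (hx : ∀ i, 0 < x i)
    (hbudget : ∑ i, (x i - 1 + pc) / hbar (Fin.castLE hℓK i) ≤ pt) :
    ∑ i, log (x i) ≤ throughput hbar pt pc ℓ := by
  have hamgm := sum_log_le_card_mul_log (s := univ)
    (y := fun i => x i / hbar (Fin.castLE hℓK i)) (univ_nonempty_iff.mpr ⟨⟨0, hℓ⟩⟩)
    (fun i _ => div_pos (hx i) (hpos _))
    (by simpa using sum_div_le_mul_waterLevel hℓK (by omega) hbudget)
  simp only [card_univ, Fintype.card_fin] at hamgm
  have hsplit : ∑ i, log (x i)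
      = ∑ i, log (hbar (Fin.castLE hℓK i)) + ∑ i, log (x i / hbar (Fin.castLE hℓK i)) := by
    rw [← sum_add_distrib]
    refine sum_congr rfl fun i _ => ?_
    rw [log_div (hx i).ne' (hpos _).ne']
    ring
  rw [hsplit, throughput, Fin.sum_filter_val_lt hℓK]
  linarith

theorem waterLevel_lt_of_not_isFeasible (hpos : ∀ n, 0 < hbar n) (hanti : Antitone hbar)
    {m : ℕ} (hmK : m < K) {x : Fin (m + 1) → ℝ} (hx : ∀ i, 1 ≤ x i)
    (hbudget : ∑ i, (x i - 1 + pc) / hbar (Fin.castLE hmK i) ≤ pt)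
    (h : ¬IsFeasible hbar pt pc (m + 1)) :
    waterLevel hbar pt pc (m + 1) < 1 / hbar ⟨m, hmK⟩ := by
  by_contra! hge
  refine h ⟨?_, fun n hn => ?_⟩
  · rw [invGainSum_eq hmK, mul_sum]
    refine le_trans (sum_le_sum fun i _ => ?_) hbudget
    rw [mul_one_div]
    exact div_le_div_of_nonneg_right (by linarith [hx i]) (hpos _).le
  · exact (one_div_le_one_div_of_le (hpos _)
      (hanti (Fin.mk_le_mk.mpr (Nat.lt_succ_iff.mp hn)))).trans hge

theorem sum_log_le_of_budget (hpos : ∀ n, 0 < hbar n) (hanti : Antitone hbar) (hpc : 0 ≤ pc)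
    {M : ℝ} (hM0 : 0 ≤ M)
    (hM : ∀ ℓ, 1 ≤ ℓ → ℓ ≤ K → IsFeasible hbar pt pc ℓ → throughput hbar pt pc ℓ ≤ M) :
    ∀ (ℓ : ℕ) (hℓK : ℓ ≤ K) (x : Fin ℓ → ℝ), (∀ i, 1 ≤ x i) →
      ∑ i, (x i - 1 + pc) / hbar (Fin.castLE hℓK i) ≤ pt → ∑ i, log (x i) ≤ M := by
  intro ℓ
  induction ℓ with
  | zero => intro _ x _ _; simpa using hM0
  | succ m ih =>
    intro hmK x hx hbudget
    by_cases hfeas : IsFeasible hbar pt pc (m + 1)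
    · exact (sum_log_le_throughput hpos hmK m.succ_pos (fun i => by linarith [hx i])
        hbudget).trans (hM _ m.succ_pos hmK hfeas)
    · have hweak : ∑ i, x i / hbar (Fin.castLE hmK i)
          < (m + 1) / hbar ⟨m, hmK⟩ :=
        calc _ ≤ ((m + 1 : ℕ) : ℝ) * waterLevel hbar pt pc (m + 1) :=
              sum_div_le_mul_waterLevel hmK (by omega) hbudget
          _ < ((m + 1 : ℕ) : ℝ) * (1 / hbar ⟨m, hmK⟩) := by
              gcongr
              exact waterLevel_lt_of_not_isFeasible hpos hanti hmK hx hbudget hfeas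
          _ = _ := by push_cast; ring
      obtain ⟨x', hx', hbudget', hlog⟩ := exists_sum_log_le_of_drop_last
        (g := fun i => hbar (Fin.castLE hmK i)) (fun i => hpos _) hpc hx hbudget hweak
      exact hlog.trans (ih (by omega) x' hx' hbudget')

theorem sumRate_le_of_budget (hpos : ∀ n, 0 < hbar n) (hanti : Antitone hbar) (hpc : 0 ≤ pc)
    {M : ℝ} (hM0 : 0 ≤ M)
    (hM : ∀ ℓ, 1 ≤ ℓ → ℓ ≤ K → IsFeasible hbar pt pc ℓ → throughput hbar pt pc ℓ ≤ M)
    {Q : Fin K → ℝ} (hQ : ∀ n, 0 ≤ Q n) (hQt : ∑ n, Q n ≤ pt) : sumRate hbar pc Q ≤ M := by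
  set A := univ.filter (fun n => pc ≤ Q n * hbar n)
  set e := A.orderEmbOfFin rfl
  have hAK : #A ≤ K := by simpa using card_le_univ A
  have hsumA : ∀ f : Fin K → ℝ, ∑ n ∈ A, f n = ∑ i, f (e i) := fun f => by
    conv_lhs => rw [← map_orderEmbOfFin_univ A rfl, sum_map]
    rfl
  have he : ∀ i, pc ≤ Q (e i) * hbar (e i) := fun i =>
    (mem_filter.mp (orderEmbOfFin_mem A rfl i)).2
  rw [sumRate, ← sum_filter, hsumA]
  refine sum_log_le_of_budget hpos hanti hpc hM0 hM #A hAK _ (fun i => by linarith [he i]) ?_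
  calc ∑ i, (1 + Q (e i) * hbar (e i) - pc - 1 + pc) / hbar (Fin.castLE hAK i)
      ≤ ∑ i, Q (e i) := sum_le_sum fun i _ => ?_
    _ = ∑ n ∈ A, Q n := (hsumA Q).symm
    _ ≤ ∑ n, Q n := sum_le_sum_of_subset_of_nonneg (subset_univ A) fun n _ _ => hQ n
    _ ≤ pt := hQt
  rw [show 1 + Q (e i) * hbar (e i) - pc - 1 + pc = Q (e i) * hbar (e i) by ring,
    div_le_iff₀ (hpos _)]
  exact mul_le_mul_of_nonneg_left (hanti (Fin.val_le_val_of_strictMono e.strictMono i)) (hQ _)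

theorem sumRate_comp_equiv {h : Fin K → ℝ} (σ : Equiv.Perm (Fin K))
    (hperm : ∀ n, hbar n = h (σ n)) (P : Fin K → ℝ) :
    sumRate h pc P = sumRate hbar pc (P ∘ σ) := by
  rw [sumRate, sumRate, ← Equiv.sum_comp σ]
  simp only [Function.comp, hperm]

theorem IsFeasible.waterFill_nonneg (hpos : ∀ n, 0 < hbar n) (hpc : 0 ≤ pc) {L : ℕ}
    (h : IsFeasible hbar pt pc L) (n : Fin K) : 0 ≤ waterFill hbar pt pc L n := by
  unfold waterFill
  split_ifs with hn
  · have := h.2 n hn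
    have := div_nonneg hpc (hpos n).le
    rw [sub_div]
    linarith
  · exact le_rfl

theorem sum_waterFill {L : ℕ} (hL : L ≠ 0) (hLK : L ≤ K) :
    ∑ n, waterFill hbar pt pc L n = pt := by
  have hS : ∑ n ∈ univ.filter (fun n : Fin K => (n : ℕ) < L), (1 - pc) / hbar n
      = (1 - pc) * invGainSum hbar L := by
    simp only [invGainSum, mul_sum, mul_one_div]
  simp only [waterFill]
  rw [← sum_filter, sum_sub_distrib, sum_const, Fin.card_filter_val_lt, min_eq_right hLK,
    nsmul_eq_mul, mul_waterLevel hL, hS]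
  ring

theorem IsFeasible.sumRate_waterFill (hpos : ∀ n, 0 < hbar n) (hpc : 0 < pc) {L : ℕ}
    (h : IsFeasible hbar pt pc L) (hL : 1 ≤ L) (hLK : L ≤ K) :
    sumRate hbar pc (waterFill hbar pt pc L) = throughput hbar pt pc L := by
  have hη := h.waterLevel_pos hpos hL hLK
  rw [sumRate, throughput_eq_sum_log hpos hLK hη, sum_filter]
  refine sum_congr rfl fun n _ => ?_
  by_cases hn : (n : ℕ) < L
  · have hprod : (waterLevel hbar pt pc L - (1 - pc) / hbar n) * hbar n
        = hbar n * waterLevel hbar pt pc L - 1 + pc := by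
      field_simp [(hpos n).ne']
      ring
    have hge : 1 ≤ hbar n * waterLevel hbar pt pc L := by
      have := h.2 n hn
      rwa [div_le_iff₀ (hpos n), mul_comm] at this
    simp only [waterFill, if_pos hn, hprod]
    rw [if_pos (by linarith)]
    congr 1
    ring
  · simp only [waterFill, if_neg hn, zero_mul]
    rw [if_neg (not_le.mpr hpc)]

end

end Swipt

theorem stmt_13_general (K : ℕ) (h hbar : Fin K → ℝ) (σ : Equiv.Perm (Fin K))
    (pt pc : ℝ) (lmax Lstar : ℕ)
    (hpos : ∀ n, 0 < h n)
    (hperm : ∀ n, hbar n = h (σ n)) (hdesc : Antitone hbar)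
    (hpc : 0 < pc) :
    let η : ℕ → ℝ := fun ℓ =>
      (pt + (1 - pc) * ∑ n ∈ Finset.univ.filter (fun n : Fin K => (n : ℕ) < ℓ),
        1 / hbar n) / ℓ
    let cond : ℕ → Prop := fun ℓ =>
      pc * (∑ n ∈ Finset.univ.filter (fun n : Fin K => (n : ℕ) < ℓ), 1 / hbar n)
        ≤ pt ∧
      ∀ n : Fin K, (n : ℕ) < ℓ → 1 / hbar n ≤ η ℓ
    let V : ℕ → ℝ := fun ℓ =>
      (∑ n ∈ Finset.univ.filter (fun n : Fin K => (n : ℕ) < ℓ),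
        Real.log (hbar n)) + ℓ * Real.log (η ℓ)
    let Pstar : Fin K → ℝ := fun n =>
      if ((σ.symm n : Fin K) : ℕ) < Lstar then pc / h n + (η Lstar - 1 / h n)
      else 0
    let F : (Fin K → ℝ) → ℝ := fun P =>
      ∑ n, if pc ≤ P n * h n then Real.log (1 + P n * h n - pc) else 0
    -- `ℓ_max` is the largest `ℓ ∈ {1,…,K}` satisfying the feasibility condition
    1 ≤ lmax → lmax ≤ K → cond lmax →
    (∀ ℓ, 1 ≤ ℓ → ℓ ≤ K → cond ℓ → ℓ ≤ lmax) →
    -- `L*` maximizes the throughput `V(ℓ)` over `1 ≤ ℓ ≤ ℓ_max`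
    1 ≤ Lstar → Lstar ≤ lmax →
    (∀ ℓ, 1 ≤ ℓ → ℓ ≤ lmax → V ℓ ≤ V Lstar) →
    (∀ n, 0 ≤ Pstar n) ∧ (∑ n, Pstar n) ≤ pt ∧
    (∀ P : Fin K → ℝ, (∀ n, 0 ≤ P n) → (∑ n, P n) ≤ pt → F P ≤ F Pstar) ∧
    F Pstar = V Lstar := by
  intro η cond V Pstar F _ hlmK hcondlm hmaxsel hL1 hLlm hVmax
  have hbpos : ∀ n, 0 < hbar n := fun n => hperm n ▸ hpos (σ n)
  have hLK : Lstar ≤ K := hLlm.trans hlmK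
  have hfeas : Swipt.IsFeasible hbar pt pc Lstar :=
    Swipt.IsFeasible.of_le hbpos hdesc hpc.le hcondlm hL1 hLlm hlmK
  have hsorted : Pstar ∘ σ = Swipt.waterFill hbar pt pc Lstar := by
    funext m
    simp only [Function.comp, Pstar, η, Swipt.waterFill, Swipt.waterLevel, Swipt.invGainSum,
      Equiv.symm_apply_apply, ← hperm]
    split_ifs
    · ring
    · rfl
  have hvalue : F Pstar = V Lstar := by
    rw [show F Pstar = _ from Swipt.sumRate_comp_equiv σ hperm Pstar, hsorted]
    exact hfeas.sumRate_waterFill hbpos hpc hL1 hLK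
  refine ⟨fun n => ?_, ?_, fun P hP hPt => ?_, hvalue⟩
  · simpa [← hsorted] using hfeas.waterFill_nonneg hbpos hpc.le (σ.symm n)
  · rw [← Equiv.sum_comp σ, ← Function.comp_def, hsorted, Swipt.sum_waterFill (by omega) hLK]
  · rw [hvalue, show F P = _ from Swipt.sumRate_comp_equiv σ hperm P]
    refine Swipt.sumRate_le_of_budget hbpos hdesc hpc.le (hfeas.throughput_nonneg hbpos hL1 hLK)
      (fun ℓ h1 hK' hc => hVmax ℓ h1 (hmaxsel ℓ h1 hK' hc)) (fun n => hP (σ n))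
      ((Equiv.sum_comp σ P).trans_le hPt)

/-- Multi-user downlink IT with variable coding rates (Lemma 1): with gains
`h_n > 0`, descending rearrangement `h̄`, water levels `η(ℓ)`, `ℓ_max` the largest
feasible number of active mobiles and `L*` the throughput-maximizing number of
streams, the allocation giving `p_c/h̄_n + η(L*) − 1/h̄_n` to the `L*` strongest
sub-channels and zero elsewhere maximizes
`∑ 𝟙[P_n h_n ≥ p_c] log(1 + P_n h_n − p_c)` subject to `P ≥ 0, ∑ P_n ≤ p_t`,
with maximum value `∑_{n=1}^{L*} log h̄_n + L* log η(L*)`. -/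
theorem stmt_13 (K : ℕ) (hK : 1 ≤ K) (h hbar : Fin K → ℝ) (σ : Equiv.Perm (Fin K))
    (pt pc : ℝ) (lmax Lstar : ℕ)
    (hpos : ∀ n, 0 < h n)
    (hperm : ∀ n, hbar n = h (σ n)) (hdesc : Antitone hbar)
    (hpt : 0 < pt) (hpc : 0 < pc) :
    let η : ℕ → ℝ := fun ℓ =>
      (pt + (1 - pc) * ∑ n ∈ Finset.univ.filter (fun n : Fin K => (n : ℕ) < ℓ),
        1 / hbar n) / ℓ
    let cond : ℕ → Prop := fun ℓ =>
      pc * (∑ n ∈ Finset.univ.filter (fun n : Fin K => (n : ℕ) < ℓ), 1 / hbar n)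
        ≤ pt ∧
      ∀ n : Fin K, (n : ℕ) < ℓ → 1 / hbar n ≤ η ℓ
    let V : ℕ → ℝ := fun ℓ =>
      (∑ n ∈ Finset.univ.filter (fun n : Fin K => (n : ℕ) < ℓ),
        Real.log (hbar n)) + ℓ * Real.log (η ℓ)
    let Pstar : Fin K → ℝ := fun n =>
      if ((σ.symm n : Fin K) : ℕ) < Lstar then pc / h n + (η Lstar - 1 / h n)
      else 0
    let F : (Fin K → ℝ) → ℝ := fun P =>
      ∑ n, if pc ≤ P n * h n then Real.log (1 + P n * h n - pc) else 0
    -- `ℓ_max` is the largest `ℓ ∈ {1,…,K}` satisfying the feasibility condition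
    1 ≤ lmax → lmax ≤ K → cond lmax →
    (∀ ℓ, 1 ≤ ℓ → ℓ ≤ K → cond ℓ → ℓ ≤ lmax) →
    -- `L*` maximizes the throughput `V(ℓ)` over `1 ≤ ℓ ≤ ℓ_max`
    1 ≤ Lstar → Lstar ≤ lmax →
    (∀ ℓ, 1 ≤ ℓ → ℓ ≤ lmax → V ℓ ≤ V Lstar) →
    (∀ n, 0 ≤ Pstar n) ∧ (∑ n, Pstar n) ≤ pt ∧
    (∀ P : Fin K → ℝ, (∀ n, 0 ≤ P n) → (∑ n, P n) ≤ pt → F P ≤ F Pstar) ∧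
    F Pstar = V Lstar :=
  stmt_13_general K h hbar σ pt pc lmax Lstar hpos hperm hdesc hpc
end

section
/- Let h > 0, θ > 0, p_c > 0, and σ_a², σ_b² > 0 with σ_a² + σ_b² = 1. Let β̃* = (c(1) + √(c(1)² + 4d))/2 with c(1) = 1 − σ_b²/σ_a² − p_c/(θσ_a²) and d = σ_b²/σ_a². Then the minimum P ≥ 0 for which there exists β ∈ [0,1] with β·P·h/(β·σ_a² + σ_b²) ≥ θ and (1−β)·P·h ≥ p_c equals p_c/((1−β̃*)·h), and this minimum is attained with β = β̃*, at which both constraints hold with equality; moreover p_c/((1−β̃*)·h) = θ·(β̃*σ_a² + σ_b²)/(β̃*·h). -/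
/-!
For a fixed splitting ratio `β ∈ (0, 1)` the SNR constraint asks for
`P ≥ θ(βσa² + σb²)/(βh)`, which decreases in `β`, and the circuit constraint asks for
`P ≥ p_c/((1-β)h)`, which increases in `β`. The least feasible power is therefore reached
where the two bounds cross; clearing denominators, the crossing condition
`θ(1-β)(βσa² + σb²) = p_c β` is the quadratic `β² = c β + d`, whose positive root is `β̃*`.
-/

open Real

namespace SWIPT

lemma quadratic_root_sq {c d : ℝ} (hd : 0 ≤ d) :
    ((c + √(c ^ 2 + 4 * d)) / 2) ^ 2 = c * ((c + √(c ^ 2 + 4 * d)) / 2) + d := by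
  linear_combination Real.sq_sqrt (show 0 ≤ c ^ 2 + 4 * d by positivity) / 4

lemma quadratic_root_pos {c d : ℝ} (hd : 0 < d) : 0 < (c + √(c ^ 2 + 4 * d)) / 2 := by
  have : |c| < √(c ^ 2 + 4 * d) := by
    rw [← sqrt_sq_eq_abs]
    exact sqrt_lt_sqrt (sq_nonneg _) (by linarith)
  linarith [neg_abs_le c]

variable {θ pc a b h β β' P : ℝ}

lemma crossing_of_sq_eq (hθ : θ ≠ 0) (ha : a ≠ 0)
    (hβ : β ^ 2 = (1 - b / a - pc / (θ * a)) * β + b / a) :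
    θ * ((1 - β) * (β * a + b)) = pc * β := by
  field_simp at hβ
  linear_combination (-1) * hβ

lemma lt_one_of_crossing (hθ : 0 < θ) (hpc : 0 < pc) (ha : 0 < a) (hb : 0 ≤ b) (hβ : 0 < β)
    (hcross : θ * ((1 - β) * (β * a + b)) = pc * β) : β < 1 := by
  have hden : 0 < θ * (β * a + b) := by positivity
  nlinarith [mul_pos hpc hβ]

lemma circuit_power_eq_snr_power (hh : h ≠ 0) (hβ0 : β ≠ 0) (hβ1 : 1 - β ≠ 0)
    (hcross : θ * ((1 - β) * (β * a + b)) = pc * β) :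
    pc / ((1 - β) * h) = θ * (β * a + b) / (β * h) := by
  rw [div_eq_div_iff (mul_ne_zero hβ1 hh) (mul_ne_zero hβ0 hh)]
  linear_combination (-h) * hcross

lemma snr_power_le_of_le (hθ : 0 ≤ θ) (ha : 0 < a) (hb : 0 ≤ b) (hh : 0 < h) (hβ : 0 < β)
    (hββ' : β ≤ β') (hsnr : θ ≤ β * P * h / (β * a + b)) :
    θ * (β' * a + b) / (β' * h) ≤ P := by
  have hβ' : 0 < β' := hβ.trans_le hββ'
  rw [le_div_iff₀ (by positivity)] at hsnr
  rw [div_le_iff₀ (by positivity)]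
  -- `θ(βa + b)/β = θa + θb/β` decreases in `β`.
  have hmono : β * (θ * (β' * a + b)) ≤ β' * (θ * (β * a + b)) := by
    nlinarith [mul_nonneg (mul_nonneg hθ hb) (sub_nonneg.mpr hββ')]
  nlinarith [mul_le_mul_of_nonneg_left hsnr hβ'.le]

lemma circuit_power_le_of_le (hh : 0 < h) (hβ'1 : β' < 1) (hβ'β : β' ≤ β) (hP : 0 ≤ P)
    (hcirc : pc ≤ (1 - β) * P * h) : pc / ((1 - β') * h) ≤ P := by
  rw [div_le_iff₀ (mul_pos (sub_pos.mpr hβ'1) hh)]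
  nlinarith [mul_nonneg (sub_nonneg.mpr hβ'β) (mul_nonneg hP hh.le)]

lemma le_of_feasible (hθ : 0 < θ) (ha : 0 < a) (hb : 0 ≤ b) (hh : 0 < h) (hβ'1 : β' < 1)
    (hpower : pc / ((1 - β') * h) = θ * (β' * a + b) / (β' * h))
    (hP : 0 ≤ P) (hβ0 : 0 ≤ β) (hsnr : θ ≤ β * P * h / (β * a + b))
    (hcirc : pc ≤ (1 - β) * P * h) :
    pc / ((1 - β') * h) ≤ P := by
  have hβ : 0 < β := by
    refine hβ0.lt_of_ne fun hβ ↦ ?_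
    simp only [← hβ, zero_mul, zero_div] at hsnr
    linarith
  rcases le_total β β' with hββ' | hβ'β
  · rw [hpower]
    exact snr_power_le_of_le hθ.le ha hb hh hβ hββ' hsnr
  · exact circuit_power_le_of_le hh hβ'1 hβ'β hP hcirc

end SWIPT

open SWIPT in
theorem stmt_14_general (h θ pc σa2 σb2 : ℝ)
    (hh : 0 < h) (hθ : 0 < θ) (hpc : 0 < pc)
    (ha : 0 < σa2) (hb : 0 < σb2) :
    let c : ℝ := 1 - σb2 / σa2 - pc / (θ * σa2)
    let d : ℝ := σb2 / σa2
    let βt : ℝ := (c + Real.sqrt (c ^ 2 + 4 * d)) / 2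
    IsLeast
      {P : ℝ | 0 ≤ P ∧ ∃ β : ℝ, 0 ≤ β ∧ β ≤ 1 ∧
        θ ≤ β * P * h / (β * σa2 + σb2) ∧ pc ≤ (1 - β) * P * h}
      (pc / ((1 - βt) * h)) ∧
    (βt * (pc / ((1 - βt) * h)) * h / (βt * σa2 + σb2) = θ ∧
      (1 - βt) * (pc / ((1 - βt) * h)) * h = pc) ∧
    pc / ((1 - βt) * h) = θ * (βt * σa2 + σb2) / (βt * h) := by
  intro c d βt
  have hβt0 : 0 < βt := quadratic_root_pos (div_pos hb ha)
  have hcross : θ * ((1 - βt) * (βt * σa2 + σb2)) = pc * βt :=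
    crossing_of_sq_eq hθ.ne' ha.ne' (quadratic_root_sq (div_pos hb ha).le)
  have hβt1 : βt < 1 := lt_one_of_crossing hθ hpc ha hb.le hβt0 hcross
  have hpower := circuit_power_eq_snr_power hh.ne' hβt0.ne' (sub_ne_zero.mpr hβt1.ne') hcross
  have hcirc : (1 - βt) * (pc / ((1 - βt) * h)) * h = pc := by
    field_simp [(sub_pos.mpr hβt1).ne']
  have hsnr : βt * (pc / ((1 - βt) * h)) * h / (βt * σa2 + σb2) = θ := by
    rw [hpower]
    field_simp
  refine ⟨⟨⟨by positivity, βt, hβt0.le, hβt1.le, hsnr.ge, hcirc.ge⟩, ?_⟩, ⟨hsnr, hcirc⟩, hpower⟩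
  rintro P ⟨hP, β, hβ0, -, hsnrβ, hcircβ⟩
  exact le_of_feasible hθ ha hb.le hh hβt1 hpower hP hβ0 hsnrβ hcircβ

/-- Minimum power to serve a mobile in the multi-user downlink fixed-rate
system: the least `P ≥ 0` for which some splitting ratio `β ∈ [0,1]` meets both
the SNR constraint `βPh/(βσa² + σb²) ≥ θ` and the circuit-power constraint
`(1−β)Ph ≥ p_c` equals `p_c/((1−β̃*)h)`, attained at `β = β̃*` with both
constraints tight; moreover `p_c/((1−β̃*)h) = θ(β̃*σa² + σb²)/(β̃* h)`. -/
theorem stmt_14 (h θ pc σa2 σb2 : ℝ)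
    (hh : 0 < h) (hθ : 0 < θ) (hpc : 0 < pc)
    (ha : 0 < σa2) (hb : 0 < σb2) (hsum : σa2 + σb2 = 1) :
    let c : ℝ := 1 - σb2 / σa2 - pc / (θ * σa2)
    let d : ℝ := σb2 / σa2
    let βt : ℝ := (c + Real.sqrt (c ^ 2 + 4 * d)) / 2
    IsLeast
      {P : ℝ | 0 ≤ P ∧ ∃ β : ℝ, 0 ≤ β ∧ β ≤ 1 ∧
        θ ≤ β * P * h / (β * σa2 + σb2) ∧ pc ≤ (1 - β) * P * h}
      (pc / ((1 - βt) * h)) ∧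
    (βt * (pc / ((1 - βt) * h)) * h / (βt * σa2 + σb2) = θ ∧
      (1 - βt) * (pc / ((1 - βt) * h)) * h = pc) ∧
    pc / ((1 - βt) * h) = θ * (βt * σa2 + σb2) / (βt * h) :=
  stmt_14_general h θ pc σa2 σb2 hh hθ hpc ha hb
end

section
/- Let K ≥ 1, let h : Fin K → ℝ be strictly positive channel gains with descending rearrangement h̄_1 ≥ … ≥ h̄_K, let θ > 0, p_c > 0, p_t > 0, and σ_a², σ_b² > 0 with σ_a² + σ_b² = 1. Let β̃* = (c(1) + √(c(1)² + 4d))/2 with c(1) = 1 − σ_b²/σ_a² − p_c/(θσ_a²) and d = σ_b²/σ_a², and let m_max be the largest integer m ∈ {0,1,…,K} with (p_c/(1−β̃*))·∑_{n=1}^m 1/h̄_n ≤ p_t. Then the maximum over allocations P : Fin K → ℝ with P_n ≥ 0 and ∑_{n=1}^K P_n ≤ p_t and splitting ratios β_n ∈ [0,1] of ∑_{n=1}^K 𝟙[β_n·P_n·h_n/(β_nσ_a² + σ_b²) ≥ θ]·𝟙[(1−β_n)·P_n·h_n ≥ p_c] equals m_max, attained by assigning power p_c/((1−β̃*)·h̄_n)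 with β_n = β̃* to the m_max sub-channels with the largest gains and zero power elsewhere. -/
/-!
At splitting ratio `β`, a mobile receiving power `x = P h` is served iff
`x ≥ θ (β σa² + σb²) / β` and `x ≥ p_c / (1 - β)`. The first bound decreases and the second
increases in `β`; they meet at `β̃*`, the positive root of `β² = c β + d`. So serving mobile `n`
costs at least `p_c / ((1 - β̃*) h_n)`, with equality at `β̃*`, and serving `m` mobiles costs at
least `p_c / (1 - β̃*)` times the sum of the `m` smallest values of `1 / h_n`: exactly what greedy
channel inversion on the strongest sub-channels spends.
-/

open Finset

section QuadraticRoot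

variable {c d : ℝ}

lemma quadratic_root_sq (hd : 0 ≤ d) :
    ((c + √(c ^ 2 + 4 * d)) / 2) ^ 2 = c * ((c + √(c ^ 2 + 4 * d)) / 2) + d := by
  have hs := Real.sq_sqrt (by positivity : 0 ≤ c ^ 2 + 4 * d)
  linear_combination hs / 4

lemma quadratic_root_pos (hd : 0 < d) : 0 < (c + √(c ^ 2 + 4 * d)) / 2 := by
  have : |c| < √(c ^ 2 + 4 * d) := by
    rw [← Real.sqrt_sq_eq_abs]; gcongr; linarith
  linarith [neg_abs_le c]

lemma quadratic_root_lt_one (hd : 0 ≤ d) (hcd : c + d < 1) : (c + √(c ^ 2 + 4 * d)) / 2 < 1 := by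
  have : √(c ^ 2 + 4 * d) < 2 - c := (Real.sqrt_lt' (by linarith)).mpr (by nlinarith)
  linarith

end QuadraticRoot

noncomputable def optimalRatio (θ pc σa2 σb2 : ℝ) : ℝ :=
  let c : ℝ := 1 - σb2 / σa2 - pc / (θ * σa2)
  let d : ℝ := σb2 / σa2
  (c + √(c ^ 2 + 4 * d)) / 2

section OptimalRatio

variable {θ pc σa2 σb2 : ℝ}

lemma optimalRatio_pos (ha : 0 < σa2) (hb : 0 < σb2) : 0 < optimalRatio θ pc σa2 σb2 :=
  quadratic_root_pos (div_pos hb ha)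

lemma optimalRatio_lt_one (hθ : 0 < θ) (hpc : 0 < pc) (ha : 0 < σa2) (hb : 0 < σb2) :
    optimalRatio θ pc σa2 σb2 < 1 := by
  have : 0 < pc / (θ * σa2) := by positivity
  exact quadratic_root_lt_one (div_pos hb ha).le (by linarith)

-- The two received-power thresholds `θ (β σa² + σb²) / β` and `p_c / (1 - β)` agree at
-- `β = optimalRatio`; this is that identity with the denominators cleared.
lemma optimalRatio_balance (hθ : 0 < θ) (ha : 0 < σa2) (hb : 0 < σb2) :
    pc * optimalRatio θ pc σa2 σb2 =
      θ * (optimalRatio θ pc σa2 σb2 * σa2 + σb2) * (1 - optimalRatio θ pc σa2 σb2) := by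
  have hq := quadratic_root_sq (c := 1 - σb2 / σa2 - pc / (θ * σa2)) (div_pos hb ha).le
  set β := optimalRatio θ pc σa2 σb2
  change β ^ 2 = (1 - σb2 / σa2 - pc / (θ * σa2)) * β + σb2 / σa2 at hq
  field_simp at hq
  linear_combination hq

end OptimalRatio

section Mobile

variable {θ pc σa2 σb2 β₀ : ℝ}

lemma snr_constraint_mono (hθb : 0 ≤ θ * σb2) {β β' x : ℝ} (hβ : 0 < β) (hββ' : β ≤ β')
    (hsnr : θ * (β * σa2 + σb2) ≤ β * x) : θ * (β' * σa2 + σb2) ≤ β' * x := by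
  refine le_of_mul_le_mul_left ?_ hβ
  nlinarith [mul_le_mul_of_nonneg_left hsnr (hβ.trans_le hββ').le,
    mul_le_mul_of_nonneg_left hββ' hθb]

lemma div_one_sub_le_of_served (hθ : 0 < θ) (ha : 0 < σa2) (hb : 0 < σb2)
    (hβ₀ : 0 < β₀) (hβ₀1 : β₀ < 1) (hbal : pc * β₀ = θ * (β₀ * σa2 + σb2) * (1 - β₀))
    {β x : ℝ} (hβ : 0 ≤ β) (hx : 0 ≤ x)
    (hsnr : θ ≤ β * x / (β * σa2 + σb2)) (hhv : pc ≤ (1 - β) * x) :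
    pc / (1 - β₀) ≤ x := by
  rw [div_le_iff₀ (by linarith), mul_comm]
  rcases le_or_gt β₀ β with hle | hlt
  · nlinarith
  have hsnr' : θ * (β * σa2 + σb2) ≤ β * x := by
    rw [le_div_iff₀ (by positivity)] at hsnr; linarith
  have hβpos : 0 < β := by
    rcases hβ.lt_or_eq with h | rfl
    · exact h
    · nlinarith [mul_pos hθ hb]
  have := snr_constraint_mono (mul_pos hθ hb).le hβpos hlt.le hsnr'
  refine le_of_mul_le_mul_left ?_ hβ₀
  nlinarith [mul_le_mul_of_nonneg_left this (by linarith : (0 : ℝ) ≤ 1 - β₀)]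

end Mobile

lemma Fin.val_le_of_strictMono_s15 {m K : ℕ} {g : Fin m → Fin K} (hg : StrictMono g) (i : Fin m) :
    (i : ℕ) ≤ g i :=
  calc (i : ℕ) = #(Iio i) := (Fin.card_Iio i).symm
    _ ≤ #(Iio (g i)) :=
      card_le_card_of_injOn g (fun j hj => by simpa using hg (by simpa using hj))
        hg.injective.injOn
    _ = g i := Fin.card_Iio _

lemma Fin.filter_val_lt_eq_map_castLEEmb {m K : ℕ} (hm : m ≤ K) :
    univ.filter (fun n : Fin K => (n : ℕ) < m) = univ.map (Fin.castLEEmb hm) := by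
  ext n
  simp only [mem_filter, mem_univ, true_and, mem_map, Fin.castLEEmb_apply]
  exact ⟨fun hn => ⟨⟨n, hn⟩, rfl⟩, by rintro ⟨i, rfl⟩; exact i.isLt⟩

lemma sum_filter_val_lt_card_le_sum {K : ℕ} {M : Type*} [AddCommMonoid M] [PartialOrder M]
    [IsOrderedAddMonoid M] {f : Fin K → M} (hf : Monotone f) (T : Finset (Fin K)) :
    ∑ n ∈ univ.filter (fun n : Fin K => (n : ℕ) < #T), f n ≤ ∑ t ∈ T, f t := by
  have hT : #T ≤ K := by simpa using card_le_univ T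
  set e := T.orderEmbOfFin rfl
  rw [Fin.filter_val_lt_eq_map_castLEEmb hT, sum_map]
  conv_rhs => rw [← map_orderEmbOfFin_univ T rfl, sum_map]
  exact sum_le_sum fun i _ => hf (Fin.le_def.mpr (Fin.val_le_of_strictMono_s15 e.strictMono i))

lemma sum_filter_val_lt_card_inv_le {K : ℕ} {h hbar : Fin K → ℝ} (σ : Equiv.Perm (Fin K))
    (hpos : ∀ n, 0 < h n) (hperm : ∀ n, hbar n = h (σ n)) (hdesc : Antitone hbar)
    (S : Finset (Fin K)) :
    ∑ n ∈ univ.filter (fun n : Fin K => (n : ℕ) < #S), 1 / hbar n ≤ ∑ n ∈ S, 1 / h n := by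
  have hmono : Monotone fun n => 1 / hbar n := fun i j hij =>
    one_div_le_one_div_of_le (hperm j ▸ hpos _) (hdesc hij)
  have := sum_filter_val_lt_card_le_sum hmono (S.map σ.symm.toEmbedding)
  simpa [hperm] using this

lemma sum_ite_symm_val_lt {K m : ℕ} {M : Type*} [AddCommMonoid M] (σ : Equiv.Perm (Fin K))
    (g : Fin K → M) :
    ∑ n, (if ((σ.symm n : Fin K) : ℕ) < m then g n else 0) =
      ∑ n ∈ univ.filter (fun n : Fin K => (n : ℕ) < m), g (σ n) := by
  rw [← Equiv.sum_comp σ, sum_filter]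
  simp

lemma card_filter_symm_val_lt {K m : ℕ} (hm : m ≤ K) (σ : Equiv.Perm (Fin K)) :
    #(univ.filter fun n : Fin K => ((σ.symm n : Fin K) : ℕ) < m) = m := by
  rw [card_equiv σ.symm (t := univ.filter fun n : Fin K => (n : ℕ) < m) (by simp),
    Fin.card_filter_val_lt, min_eq_right hm]

section Served

variable {ι : Type*} [Fintype ι] {θ pc σa2 σb2 β₀ : ℝ} {h : ι → ℝ}

variable (θ pc σa2 σb2 h) in
noncomputable def servedSet (P β : ι → ℝ) : Finset ι :=
  univ.filter fun n => θ ≤ β n * P n * h n / (β n * σa2 + σb2) ∧ pc ≤ (1 - β n) * P n * h n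

lemma mul_sum_inv_le_sum_of_servedSet (hθ : 0 < θ) (ha : 0 < σa2) (hb : 0 < σb2)
    (hβ₀ : 0 < β₀) (hβ₀1 : β₀ < 1) (hbal : pc * β₀ = θ * (β₀ * σa2 + σb2) * (1 - β₀))
    (hpos : ∀ n, 0 < h n) {P β : ι → ℝ} (hP : ∀ n, 0 ≤ P n) (hβ : ∀ n, 0 ≤ β n) :
    pc / (1 - β₀) * ∑ n ∈ servedSet θ pc σa2 σb2 h P β, 1 / h n ≤ ∑ n, P n := by
  rw [mul_sum]
  refine (sum_le_sum fun n hn => ?_).trans (sum_le_sum_of_subset_of_nonneg (subset_univ _)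
    fun n _ _ => hP n)
  obtain ⟨hsnr, hhv⟩ := (mem_filter.mp hn).2
  rw [mul_assoc] at hsnr hhv
  have := div_one_sub_le_of_served hθ ha hb hβ₀ hβ₀1 hbal (hβ n)
    (mul_nonneg (hP n) (hpos n).le) hsnr hhv
  rwa [← div_eq_mul_one_div, div_le_iff₀ (hpos n)]

lemma servedSet_channelInversion (ha : 0 < σa2) (hb : 0 < σb2) (hpc : 0 < pc)
    (hβ₀ : 0 < β₀) (hβ₀1 : β₀ < 1) (hbal : pc * β₀ = θ * (β₀ * σa2 + σb2) * (1 - β₀))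
    (hpos : ∀ n, 0 < h n) (p : ι → Prop) [DecidablePred p] :
    servedSet θ pc σa2 σb2 h (fun n => if p n then pc / ((1 - β₀) * h n) else 0)
      (fun _ => β₀) = univ.filter p := by
  ext n
  have hn := hpos n
  have h1 : 0 < 1 - β₀ := by linarith
  simp only [servedSet, mem_filter, mem_univ, true_and]
  split_ifs with hp
  · have hx : (1 - β₀) * (pc / ((1 - β₀) * h n)) * h n = pc := by field_simp
    simp only [hp, iff_true, hx, le_refl, and_true]
    rw [le_div_iff₀ (by positivity)]
    field_simp
    linear_combination -hbal
  · simp only [hp, iff_false, mul_zero, zero_mul, not_and, not_le]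
    exact fun _ => hpc

end Served

theorem stmt_15_general (K : ℕ) (h hbar : Fin K → ℝ) (σ : Equiv.Perm (Fin K))
    (θ pc pt σa2 σb2 : ℝ) (mmax : ℕ)
    (hpos : ∀ n, 0 < h n)
    (hperm : ∀ n, hbar n = h (σ n)) (hdesc : Antitone hbar)
    (hθ : 0 < θ) (hpc : 0 < pc)
    (ha : 0 < σa2) (hb : 0 < σb2) :
    let c : ℝ := 1 - σb2 / σa2 - pc / (θ * σa2)
    let d : ℝ := σb2 / σa2
    let βt : ℝ := (c + Real.sqrt (c ^ 2 + 4 * d)) / 2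
    let Pstar : Fin K → ℝ := fun n =>
      if ((σ.symm n : Fin K) : ℕ) < mmax then pc / ((1 - βt) * h n) else 0
    let served : (Fin K → ℝ) → (Fin K → ℝ) → ℕ := fun P β =>
      (Finset.univ.filter (fun n : Fin K =>
        θ ≤ β n * P n * h n / (β n * σa2 + σb2) ∧
        pc ≤ (1 - β n) * P n * h n)).card
    -- `m_max` is the largest `m ∈ {0,…,K}` meeting the power constraint
    mmax ≤ K →
    (pc / (1 - βt)) *
      (∑ n ∈ Finset.univ.filter (fun n : Fin K => (n : ℕ) < mmax), 1 / hbar n)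
      ≤ pt →
    (∀ m ≤ K,
      (pc / (1 - βt)) *
        (∑ n ∈ Finset.univ.filter (fun n : Fin K => (n : ℕ) < m), 1 / hbar n)
        ≤ pt → m ≤ mmax) →
    (∀ (P β : Fin K → ℝ), (∀ n, 0 ≤ P n) → (∑ n, P n) ≤ pt →
      (∀ n, 0 ≤ β n ∧ β n ≤ 1) → served P β ≤ mmax) ∧
    ((∀ n, 0 ≤ Pstar n) ∧ (∑ n, Pstar n) ≤ pt ∧
      served Pstar (fun _ => βt) = mmax) := by
  intro c d βt Pstar served hmK hfeas hmax
  have hβ0 : 0 < βt := optimalRatio_pos ha hb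
  have hβ1 : βt < 1 := optimalRatio_lt_one hθ hpc ha hb
  have hbal : pc * βt = θ * (βt * σa2 + σb2) * (1 - βt) := optimalRatio_balance hθ ha hb
  refine ⟨fun P β hP hPsum hβ => ?_, fun n => ?_, ?_, ?_⟩
  · refine hmax _ ((card_le_univ _).trans_eq (Fintype.card_fin K)) ?_
    calc _ ≤ pc / (1 - βt) * ∑ n ∈ servedSet θ pc σa2 σb2 h P β, 1 / h n :=
          mul_le_mul_of_nonneg_left (sum_filter_val_lt_card_inv_le σ hpos hperm hdesc _)
            (div_nonneg hpc.le (by linarith))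
      _ ≤ ∑ n, P n := mul_sum_inv_le_sum_of_servedSet hθ ha hb hβ0 hβ1 hbal hpos hP
          fun n => (hβ n).1
      _ ≤ pt := hPsum
  · have := hpos n
    have : 0 < 1 - βt := by linarith
    dsimp only [Pstar]
    split_ifs <;> positivity
  · refine le_of_eq_of_le ?_ hfeas
    rw [sum_ite_symm_val_lt, mul_sum]
    refine sum_congr rfl fun n _ => ?_
    rw [hperm, div_mul_div_comm, mul_one]
  · exact (congrArg card (servedSet_channelInversion ha hb hpc hβ0 hβ1 hbal hpos _)).trans
      (card_filter_symm_val_lt hmK σ)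

/-- Multi-user downlink IT with fixed coding rates (Proposition 4): the maximum
number of served mobiles — those whose receive SNR `β_n P_n h_n/(β_n σa² + σb²)`
meets the threshold `θ` and whose harvested power `(1−β_n) P_n h_n` covers the
circuit power `p_c` — over allocations `P ≥ 0` with `∑ P_n ≤ p_t` and splitting
ratios `β_n ∈ [0,1]`, equals `m_max`, the largest `m ∈ {0,…,K}` with
`(p_c/(1−β̃*)) ∑_{n=1}^m 1/h̄_n ≤ p_t`; it is attained by greedy channel
inversion with power `p_c/((1−β̃*) h̄_n)` and common ratio `β̃*` on the `m_max`
strongest sub-channels. -/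
theorem stmt_15 (K : ℕ) (hK : 1 ≤ K) (h hbar : Fin K → ℝ) (σ : Equiv.Perm (Fin K))
    (θ pc pt σa2 σb2 : ℝ) (mmax : ℕ)
    (hpos : ∀ n, 0 < h n)
    (hperm : ∀ n, hbar n = h (σ n)) (hdesc : Antitone hbar)
    (hθ : 0 < θ) (hpc : 0 < pc) (hpt : 0 < pt)
    (ha : 0 < σa2) (hb : 0 < σb2) (hsum : σa2 + σb2 = 1) :
    let c : ℝ := 1 - σb2 / σa2 - pc / (θ * σa2)
    let d : ℝ := σb2 / σa2
    let βt : ℝ := (c + Real.sqrt (c ^ 2 + 4 * d)) / 2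
    let Pstar : Fin K → ℝ := fun n =>
      if ((σ.symm n : Fin K) : ℕ) < mmax then pc / ((1 - βt) * h n) else 0
    let served : (Fin K → ℝ) → (Fin K → ℝ) → ℕ := fun P β =>
      (Finset.univ.filter (fun n : Fin K =>
        θ ≤ β n * P n * h n / (β n * σa2 + σb2) ∧
        pc ≤ (1 - β n) * P n * h n)).card
    -- `m_max` is the largest `m ∈ {0,…,K}` meeting the power constraint
    mmax ≤ K →
    (pc / (1 - βt)) *
      (∑ n ∈ Finset.univ.filter (fun n : Fin K => (n : ℕ) < mmax), 1 / hbar n)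
      ≤ pt →
    (∀ m ≤ K,
      (pc / (1 - βt)) *
        (∑ n ∈ Finset.univ.filter (fun n : Fin K => (n : ℕ) < m), 1 / hbar n)
        ≤ pt → m ≤ mmax) →
    (∀ (P β : Fin K → ℝ), (∀ n, 0 ≤ P n) → (∑ n, P n) ≤ pt →
      (∀ n, 0 ≤ β n ∧ β n ≤ 1) → served P β ≤ mmax) ∧
    ((∀ n, 0 ≤ Pstar n) ∧ (∑ n, Pstar n) ≤ pt ∧
      served Pstar (fun _ => βt) = mmax) :=
  stmt_15_general K h hbar σ θ pc pt σa2 σb2 mmax hpos hperm hdesc hθ hpc ha hb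
end
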